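/- arXiv:1801.05501 — 4 statements merged into one kernel-verified Lean document; each statement's English description precedes it below -/
import Mathlib

section
/- Let ε : {1,...,2n} → {1,*} be a tuple with the Dyck property, and let Φ_n : P₂(2n) → D_{(1,*)}(2n) be the map sending a pair-partition π to the tuple ε with ε(min W) = 1 and ε(max W) = * for each block W of s_n·π, where s_n is the labels-to-heights permutation. Then the cardinality of the fiber Φ_n^{-1}(ε) equals the product over all h with ε(h) = * of Choice_ε(h). -/
open scoped Classical

/-- A pair-partition of `Fin m`: every equivalence class has exactly 2 elements. -/
def IsPairPartition {m : ℕ} (π : Setoid (Fin m)) : Prop :=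
  ∀ i : Fin m, Nat.card {j : Fin m // π.r i j} = 2

/-- Number of crossings of a pair-partition, counted as quadruples a<b<c<d with
a ~ c, b ~ d, ¬ a ~ b. -/
noncomputable def crossings {m : ℕ} (π : Setoid (Fin m)) : ℕ :=
  Nat.card {t : Fin m × Fin m × Fin m × Fin m //
    t.1 < t.2.1 ∧ t.2.1 < t.2.2.1 ∧ t.2.2.1 < t.2.2.2 ∧
    π.r t.1 t.2.2.1 ∧ π.r t.2.1 t.2.2.2 ∧ ¬ π.r t.1 t.2.1}

/-- Number of blocks of a partition (setoid). -/
noncomputable def numBlocks {m : ℕ} (π : Setoid (Fin m)) : ℕ :=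
  Nat.card (Quotient π)

/-- The rainbow pair-partition ρ_{2n} (0-indexed: i paired with 2n-1-i). -/
def rainbow (n : ℕ) : Setoid (Fin (2*n)) where
  r i j := i = j ∨ (i : ℕ) + (j : ℕ) = 2*n - 1
  iseqv := by
    refine ⟨fun i => Or.inl rfl, ?_, ?_⟩
    · rintro i j (rfl | h)
      · exact Or.inl rfl
      · exact Or.inr (by omega)
    · rintro i j k (rfl | h1) (h2 | h2)
      · exact Or.inl h2
      · exact Or.inr h2
      · subst h2; exact Or.inr h1
      · have hi := i.2; have hk := k.2
        exact Or.inl (Fin.ext (by omega))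

/-- The interval pair-partition { {1,2}, {3,4}, ... } (0-indexed: blocks {2k,2k+1}). -/
def intervalPP (n : ℕ) : Setoid (Fin (2*n)) where
  r i j := (i : ℕ) / 2 = (j : ℕ) / 2
  iseqv := ⟨fun _ => rfl, Eq.symm, Eq.trans⟩

/-- The labels-to-heights permutation s_n (0-indexed). -/
noncomputable def sPerm (n : ℕ) : Equiv.Perm (Fin (2*n)) :=
  Equiv.ofBijective
    (fun i => if h : (i : ℕ) < n then ⟨2*i, by have := i.2; omega⟩
              else ⟨4*n - 2*i - 1, by have := i.2; omega⟩)
    (by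
      rw [Fintype.bijective_iff_injective_and_card]
      refine ⟨?_, rfl⟩
      intro i j hij
      have hi := i.2; have hj := j.2
      apply Fin.ext
      simp only [] at hij
      split_ifs at hij <;> simp only [Fin.mk.injEq] at hij <;> omega)

/-- Blockwise action of a permutation on a partition. -/
def permAct {m : ℕ} (s : Equiv.Perm (Fin m)) (π : Setoid (Fin m)) : Setoid (Fin m) :=
  Setoid.comap s.symm π

/-- The map Φ_n : pair-partitions → tuples in {1,*}^{2n} (true = "1", false = "*"):
a point is `true` iff it is the minimum of its block of s_n · π. -/
noncomputable def PhiMap (n : ℕ) (π : Setoid (Fin (2*n))) : Fin (2*n) → Bool :=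
  fun i => @decide (∀ j, (permAct (sPerm n) π).r i j → i ≤ j) (Classical.propDecidable _)

/-- Number of positions i < h with ε i = b. -/
noncomputable def countVal {m : ℕ} (ε : Fin m → Bool) (b : Bool) (h : ℕ) : ℕ :=
  Nat.card {i : Fin m // (i : ℕ) < h ∧ ε i = b}

/-- The Dyck property for a tuple ε : {1,...,2n} → {1,*} (true = "1", false = "*"). -/
def IsDyck {n : ℕ} (ε : Fin (2*n) → Bool) : Prop :=
  (∀ h : ℕ, h ≤ 2*n → countVal ε false h ≤ countVal ε true h) ∧
  countVal ε true (2*n) = n ∧ countVal ε false (2*n) = n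

/-- The choice number Choice_ε(h). -/
noncomputable def choiceNum {n : ℕ} (ε : Fin (2*n) → Bool) (h : Fin (2*n)) : ℕ :=
  countVal ε true (h : ℕ) - countVal ε false (h : ℕ)

/-!
After relabelling by `s_n`, the fiber over `ε` consists of the pair partitions whose blocks
open exactly at the positions `i` with `ε i = 1`. A pair partition is a fixed-point-free
involution, and such an involution is determined by sending each closer `h` (`ε h = *`) to an
opener below it, injectively: a non-attacking rook placement on the board whose row `h`
consists of the openers below `h`. These rows are nested, so placing the rooks in increasing
order of `h` leaves, in row `h`, the openers below `h` minus those already used by the closers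
below `h`: exactly `Choice_ε(h)` choices.
-/

open Finset Function

section RookPlacement

variable {ι β : Type*} [LinearOrder ι] (A : ι → Finset β)

abbrev RookPlacement (s : Finset ι) : Type _ := {f : s ↪ β // ∀ i : s, f i ∈ A i}

def RookPlacement.insertEquiv {a : ι} {s : Finset ι} (has : a ∉ s) :
    RookPlacement A (insert a s) ≃
      Σ g : RookPlacement A s, {t // t ∈ A a ∧ t ∉ Set.range g.1} where
  toFun f :=
    ⟨⟨(Subtype.impEmbedding _ _ fun _ => mem_insert_of_mem).trans f.1, fun _ => f.2 _⟩,
      f.1 ⟨a, mem_insert_self a s⟩, f.2 _, by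
        rintro ⟨i, hi⟩
        have hia := congrArg Subtype.val (f.1.injective hi)
        simp only [Subtype.impEmbedding_apply_coe] at hia
        exact has (hia ▸ i.2)⟩
  invFun x := ⟨(subtypeInsertEquivOption has).toEmbedding.trans
      (x.1.1.optionElim x.2.1 x.2.2.2), fun i => by
        by_cases hi : i.1 = a
        · simpa [subtypeInsertEquivOption, hi] using x.2.2.1
        · simpa [subtypeInsertEquivOption, hi] using x.1.2 _⟩
  left_inv f := by
    ext i
    by_cases hi : i.1 = a <;> simp [subtypeInsertEquivOption, hi, ← Subtype.coe_inj]
  right_inv x := by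
    refine Sigma.subtype_ext ?_ ?_
    · ext i
      simp [subtypeInsertEquivOption, ne_of_mem_of_not_mem i.2 has]
    · simp [subtypeInsertEquivOption]

variable {A} [Fintype β]

theorem RookPlacement.card_insert (hA : Monotone A) {a : ι} {s : Finset ι}
    (hlt : ∀ i ∈ s, i < a) :
    Nat.card (RookPlacement A (insert a s)) = Nat.card (RookPlacement A s) * (#(A a) - #s) := by
  have has : a ∉ s := fun h => lt_irrefl a (hlt a h)
  have hfiber : ∀ g : RookPlacement A s,
      Nat.card {t // t ∈ A a ∧ t ∉ Set.range g.1} = #(A a) - #s := by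
    intro g
    have hsub : univ.map g.1 ⊆ A a := by
      intro t ht
      obtain ⟨i, -, rfl⟩ := mem_map.mp ht
      exact hA (hlt i i.2).le (g.2 i)
    have hcard : #s = #(univ.map g.1) := by simp
    rw [hcard, ← card_sdiff_of_subset hsub, Nat.card_eq_fintype_card, Fintype.card_subtype]
    congr 1
    ext t
    simp
  rw [Nat.card_congr (RookPlacement.insertEquiv A has), Nat.card_sigma,
    sum_congr rfl fun g _ => hfiber g, sum_const, card_univ, smul_eq_mul, Nat.card_eq_fintype_card]

theorem RookPlacement.card_of_monotone (hA : Monotone A) (s : Finset ι) :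
    Nat.card (RookPlacement A s) = ∏ i ∈ s, (#(A i) - #{j ∈ s | j < i}) := by
  induction s using Finset.induction_on_max with
  | empty =>
    rw [prod_empty, Nat.card_eq_one_iff_unique]
    exact ⟨⟨fun f g => Subtype.ext (Subsingleton.elim _ _)⟩, ⟨⟨Embedding.ofIsEmpty, isEmptyElim⟩⟩⟩
  | insert a s hlt ih =>
    have has : a ∉ s := fun h => lt_irrefl a (hlt a h)
    rw [card_insert hA hlt, ih, prod_insert has, filter_insert, if_neg (lt_irrefl a),
      filter_true_of_mem hlt, mul_comm]
    congr 1
    refine prod_congr rfl fun i hi => ?_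
    rw [filter_insert, if_neg (hlt i hi).not_gt]

end RookPlacement

section Closers

variable {α : Type*} [Fintype α] (ε : α → Bool)

def closers : Finset α := univ.filter (ε · = false)

theorem mem_closers {i : α} : i ∈ closers ε ↔ ε i = false := by simp [closers]

end Closers

section Matching

variable {α : Type*} [LinearOrder α] (ε : α → Bool)

abbrev OpenerMatching : Type _ :=
  {p : α → α // (Involutive p ∧ ∀ i, p i ≠ i) ∧ ∀ i, ε i = true ↔ i < p i}

theorem OpenerMatching.lt_of_closer {ε : α → Bool} (p : OpenerMatching ε) {h : α}
    (hh : ε h = false) : p.1 h < h ∧ ε (p.1 h) = true := by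
  have hlt : p.1 h < h :=
    lt_of_le_of_ne (not_lt.mp fun h' => by simp [(p.2.2 h).2 h'] at hh) (p.2.1.2 h)
  exact ⟨hlt, (p.2.2 _).2 (by rwa [p.2.1.1 h])⟩

variable [Fintype α]

def openersBelow (h : α) : Finset α := univ.filter (fun t => t < h ∧ ε t = true)

theorem mem_openersBelow {h t : α} : t ∈ openersBelow ε h ↔ t < h ∧ ε t = true := by
  simp [openersBelow]

theorem openersBelow_mono : Monotone (openersBelow ε) := fun _ _ hh _ => by
  simp only [mem_openersBelow]
  exact fun ⟨ht, he⟩ => ⟨ht.trans_le hh, he⟩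

variable {ε}

def OpenerMatching.toRookPlacement (p : OpenerMatching ε) :
    RookPlacement (openersBelow ε) (closers ε) :=
  ⟨⟨fun h => p.1 h, fun _ _ e => Subtype.ext (p.2.1.1.injective e)⟩, fun h =>
    (mem_openersBelow ε).2 (p.lt_of_closer ((mem_closers ε).1 h.2))⟩

namespace RookPlacement

variable (hε : #(univ.filter (ε · = true)) = #(closers ε))
  (f : RookPlacement (openersBelow ε) (closers ε))
include hε

theorem opener_mem_range {i : α} (hi : ε i = true) : i ∈ Set.range f.1 := by
  have hsub : univ.map f.1 ⊆ univ.filter (ε · = true) := by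
    intro t ht
    obtain ⟨h, -, rfl⟩ := mem_map.mp ht
    simpa using ((mem_openersBelow ε).1 (f.2 h)).2
  have heq := eq_of_subset_of_card_le hsub (by rw [card_map, card_univ, Fintype.card_coe, hε])
  obtain ⟨h, -, hh⟩ := mem_map.mp (heq ▸ mem_filter.mpr ⟨mem_univ i, hi⟩ : i ∈ univ.map f.1)
  exact ⟨h, hh⟩

noncomputable def toMatchingFun (i : α) : α :=
  if hi : ε i = true then (Equiv.ofInjective f.1 f.1.injective).symm ⟨i, opener_mem_range hε f hi⟩
  else f.1 ⟨i, (mem_closers ε).2 (by simpa using hi)⟩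

theorem toMatchingFun_of_closer (h : closers ε) : toMatchingFun hε f h = f.1 h := by
  simp [toMatchingFun, (mem_closers ε).1 h.2]

theorem exists_toMatchingFun_of_opener {i : α} (hi : ε i = true) :
    ∃ h : closers ε, f.1 h = i ∧ toMatchingFun hε f i = h := by
  refine ⟨(Equiv.ofInjective f.1 f.1.injective).symm ⟨i, opener_mem_range hε f hi⟩,
    Equiv.apply_ofInjective_symm _ _, by simp [toMatchingFun, hi]⟩

theorem toMatchingFun_involutive : Involutive (toMatchingFun hε f) := by
  intro i
  cases hi : ε i
  · have hc : i ∈ closers ε := (mem_closers ε).2 hi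
    rw [toMatchingFun_of_closer hε f ⟨i, hc⟩]
    obtain ⟨h, hfh, hm⟩ := exists_toMatchingFun_of_opener hε f
      ((mem_openersBelow ε).1 (f.2 ⟨i, hc⟩)).2
    rw [hm, f.1.injective hfh]
  · obtain ⟨h, hfh, hm⟩ := exists_toMatchingFun_of_opener hε f hi
    rw [hm, toMatchingFun_of_closer, hfh]

theorem toMatchingFun_lt {i : α} (hi : ε i = false) : toMatchingFun hε f i < i := by
  rw [toMatchingFun_of_closer hε f ⟨i, (mem_closers ε).2 hi⟩]
  exact ((mem_openersBelow ε).1 (f.2 _)).1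

theorem lt_toMatchingFun {i : α} (hi : ε i = true) : i < toMatchingFun hε f i := by
  obtain ⟨h, hfh, hm⟩ := exists_toMatchingFun_of_opener hε f hi
  rw [hm, ← hfh]
  exact ((mem_openersBelow ε).1 (f.2 h)).1

noncomputable def toMatching : OpenerMatching ε := by
  refine ⟨toMatchingFun hε f, ⟨toMatchingFun_involutive hε f, fun i => ?_⟩, fun i => ?_⟩ <;>
    cases hi : ε i
  · exact (toMatchingFun_lt hε f hi).ne
  · exact (lt_toMatchingFun hε f hi).ne'
  · simpa using (toMatchingFun_lt hε f hi).le
  · simpa using lt_toMatchingFun hε f hi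

end RookPlacement

noncomputable def matchingEquivRookPlacement (hε : #(univ.filter (ε · = true)) = #(closers ε)) :
    OpenerMatching ε ≃ RookPlacement (openersBelow ε) (closers ε) where
  toFun := OpenerMatching.toRookPlacement
  invFun := RookPlacement.toMatching hε
  left_inv p := Subtype.ext <| funext fun i => by
    cases hi : ε i
    · exact RookPlacement.toMatchingFun_of_closer hε _ ⟨i, (mem_closers ε).2 hi⟩
    · obtain ⟨h, hfh, hm⟩ := RookPlacement.exists_toMatchingFun_of_opener hε p.toRookPlacement hi
      refine hm.trans ?_
      rw [← hfh]
      exact (p.2.1.1 h).symm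
  right_inv f := by
    ext h
    exact RookPlacement.toMatchingFun_of_closer hε f h

end Matching

noncomputable def minIndicator {m : ℕ} (σ : Setoid (Fin m)) : Fin m → Bool :=
  fun i => @decide (∀ j, σ.r i j → i ≤ j) (Classical.propDecidable _)

theorem phiMap_eq_minIndicator (n : ℕ) (π : Setoid (Fin (2*n))) :
    PhiMap n π = minIndicator (permAct (sPerm n) π) := rfl

def permActEquiv {m : ℕ} (s : Equiv.Perm (Fin m)) : Setoid (Fin m) ≃ Setoid (Fin m) where
  toFun := permAct s
  invFun := permAct s.symm
  left_inv π := Setoid.ext fun a b => by unfold permAct; simp [Setoid.comap_rel]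
  right_inv π := Setoid.ext fun a b => by unfold permAct; simp [Setoid.comap_rel]

theorem isPairPartition_permAct {m : ℕ} (s : Equiv.Perm (Fin m)) (π : Setoid (Fin m)) :
    IsPairPartition (permAct s π) ↔ IsPairPartition π := by
  have hclass : ∀ i, Nat.card {j // (permAct s π).r i j} = Nat.card {j // π.r (s.symm i) j} :=
    fun i => Nat.card_congr (s.symm.subtypeEquiv fun _ => Iff.rfl)
  simp only [IsPairPartition, hclass]
  exact (s.symm.surjective.forall (p := fun i => Nat.card {j // π.r i j} = 2)).symm

namespace IsPairPartition

variable {m : ℕ} {σ : Setoid (Fin m)} (hσ : IsPairPartition σ)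
include hσ

theorem exists_partner (i : Fin m) : ∃ j, ∀ k, k ≠ i ∧ σ.r i k ↔ k = j := by
  have h : #((univ.filter (σ.r i)).erase i) = 1 := by
    rw [card_erase_of_mem (mem_filter.mpr ⟨mem_univ _, σ.refl i⟩), ← Fintype.card_subtype,
      ← Nat.card_eq_fintype_card, hσ i]
  obtain ⟨j, hj⟩ := card_eq_one.mp h
  exact ⟨j, fun k => by simpa using Finset.ext_iff.mp hj k⟩

noncomputable def partner (i : Fin m) : Fin m := (hσ.exists_partner i).choose

theorem ne_and_rel_iff_eq_partner (i k : Fin m) : k ≠ i ∧ σ.r i k ↔ k = hσ.partner i :=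
  (hσ.exists_partner i).choose_spec k

theorem partner_ne (i : Fin m) : hσ.partner i ≠ i :=
  ((hσ.ne_and_rel_iff_eq_partner i _).2 rfl).1

theorem rel_partner (i : Fin m) : σ.r i (hσ.partner i) :=
  ((hσ.ne_and_rel_iff_eq_partner i _).2 rfl).2

theorem rel_iff (i j : Fin m) : σ.r i j ↔ j = i ∨ j = hσ.partner i := by
  rw [← hσ.ne_and_rel_iff_eq_partner]
  by_cases hji : j = i <;> simp [hji]

theorem partner_involutive : Involutive hσ.partner := fun i =>
  ((hσ.ne_and_rel_iff_eq_partner _ i).1 ⟨(hσ.partner_ne i).symm, σ.symm (hσ.rel_partner i)⟩).symm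

theorem minIndicator_eq_iff (ε : Fin m → Bool) :
    minIndicator σ = ε ↔ ∀ i, ε i = true ↔ i < hσ.partner i := by
  simp only [funext_iff, minIndicator, hσ.rel_iff, forall_eq_or_imp, le_refl, forall_eq, true_and]
  refine forall_congr' fun i => ?_
  simp only [(hσ.partner_ne i).symm.le_iff_lt]
  cases ε i <;> simp

end IsPairPartition

def involutionSetoid {α : Type*} (p : α → α) (hp : Involutive p) : Setoid α where
  r a b := b = a ∨ b = p a
  iseqv := by
    refine ⟨fun a => Or.inl rfl, ?_, ?_⟩
    · rintro a b (rfl | rfl)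
      · exact Or.inl rfl
      · exact Or.inr (hp a).symm
    · rintro a b c (rfl | rfl) (rfl | rfl)
      · exact Or.inl rfl
      · exact Or.inr rfl
      · exact Or.inr rfl
      · exact Or.inl (hp a)

theorem isPairPartition_involutionSetoid {m : ℕ} {p : Fin m → Fin m} (hp : Involutive p)
    (hfix : ∀ i, p i ≠ i) : IsPairPartition (involutionSetoid p hp) := fun i =>
  show Nat.card ({i, p i} : Set (Fin m)) = 2 from Set.ncard_pair (hfix i).symm

noncomputable def pairPartitionEquivInvolution (m : ℕ) :
    {σ : Setoid (Fin m) // IsPairPartition σ} ≃ {p : Fin m → Fin m // Involutive p ∧ ∀ i, p i ≠ i} where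
  toFun σ := ⟨σ.2.partner, σ.2.partner_involutive, σ.2.partner_ne⟩
  invFun p := ⟨involutionSetoid p.1 p.2.1, isPairPartition_involutionSetoid p.2.1 p.2.2⟩
  left_inv σ := Subtype.ext <| Setoid.ext fun i j => (σ.2.rel_iff i j).symm
  right_inv p := Subtype.ext <| funext fun i =>
    (((isPairPartition_involutionSetoid p.2.1 p.2.2).ne_and_rel_iff_eq_partner i _).1
      ⟨p.2.2 i, Or.inr rfl⟩).symm

noncomputable def pairPartitionFiberEquivMatching {m : ℕ} (ε : Fin m → Bool) :
    {σ : Setoid (Fin m) // IsPairPartition σ ∧ minIndicator σ = ε} ≃ OpenerMatching ε :=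
  (Equiv.subtypeSubtypeEquivSubtypeInter _ _).symm.trans <|
    ((pairPartitionEquivInvolution m).subtypeEquiv fun σ => σ.2.minIndicator_eq_iff ε).trans
      (Equiv.subtypeSubtypeEquivSubtypeInter _ _)

theorem countVal_eq_card {m : ℕ} (ε : Fin m → Bool) (b : Bool) (x : ℕ) :
    countVal ε b x = #{i : Fin m | (i : ℕ) < x ∧ ε i = b} := by
  rw [countVal, Nat.card_eq_fintype_card, Fintype.card_subtype]

theorem countVal_self {m : ℕ} (ε : Fin m → Bool) (b : Bool) :
    countVal ε b m = #{i | ε i = b} := by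
  simp [countVal_eq_card]

theorem choiceNum_eq_card_sub_card {n : ℕ} (ε : Fin (2*n) → Bool) (h : Fin (2*n)) :
    choiceNum ε h = #(openersBelow ε h) - #{j ∈ closers ε | j < h} := by
  rw [choiceNum, countVal_eq_card, countVal_eq_card, openersBelow, closers, filter_filter]
  simp only [Fin.lt_def, and_comm]

/-- the fiber of Φ_n over a Dyck tuple ε has cardinality
∏_{h : ε(h) = *} Choice_ε(h). -/
theorem stmt_2 (n : ℕ) (ε : Fin (2*n) → Bool) (hε : IsDyck ε) :
    Nat.card {π : Setoid (Fin (2*n)) // IsPairPartition π ∧ PhiMap n π = ε} =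
      ∏ h ∈ Finset.univ.filter (fun h : Fin (2*n) => ε h = false), choiceNum ε h := by
  have hcard : #{i | ε i = true} = #(closers ε) := by
    rw [closers, ← countVal_self, ← countVal_self, hε.2.1, hε.2.2]
  calc Nat.card {π : Setoid (Fin (2*n)) // IsPairPartition π ∧ PhiMap n π = ε}
      = Nat.card {σ : Setoid (Fin (2*n)) // IsPairPartition σ ∧ minIndicator σ = ε} :=
        Nat.card_congr <| (permActEquiv (sPerm n)).subtypeEquiv fun π =>
          and_congr (isPairPartition_permAct _ _).symm (by rw [phiMap_eq_minIndicator]; rfl)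
    _ = Nat.card (OpenerMatching ε) := Nat.card_congr (pairPartitionFiberEquivMatching ε)
    _ = Nat.card (RookPlacement (openersBelow ε) (closers ε)) :=
        Nat.card_congr (matchingEquivRookPlacement hcard)
    _ = ∏ h ∈ closers ε, (#(openersBelow ε h) - #{j ∈ closers ε | j < h}) :=
        RookPlacement.card_of_monotone (openersBelow_mono ε) _
    _ = _ := prod_congr rfl fun h _ => (choiceNum_eq_card_sub_card ε h).symm
end

section
/- Let π be a pair-partition of {1,...,2n} and let d ∈ ℕ. The number of functions I : {1,...,2n} → {1,...,d} satisfying both I(2k−1) = I(2k) for all 1 ≤ k ≤ n, and I(h) = I(k) whenever {h,k} is a block of s_n·π, equals d^{|π ∨ ρ_{2n}|}, where |π ∨ ρ_{2n}| is the number of blocks of the join of π with the rainbow pair-partition ρ_{2n}. -/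
/-!
The two conditions say that `I` is constant on the blocks of `ι ∨ s_n·π`, where
`ι = {{1,2},{3,4},…}`. Since `s_n` maps the rainbow `ρ_{2n}` blockwise onto `ι`, and acting by a
permutation is a lattice automorphism of set partitions, `ι ∨ s_n·π = s_n·(ρ_{2n} ∨ π)`, which has
as many blocks as `π ∨ ρ_{2n}`. The functions constant on the blocks of a partition with `b` blocks
are exactly the maps from the `b` blocks to `{1,…,d}`, so there are `d^b` of them.
-/


open scoped Classical

def Setoid.comapOrderIso {α β : Type*} (e : α ≃ β) : Setoid β ≃o Setoid α where
  toFun := Setoid.comap e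
  invFun := Setoid.comap e.symm
  left_inv r := Setoid.ext fun x y => by simp only [Setoid.comap_rel, Equiv.apply_symm_apply]
  right_inv r := Setoid.ext fun x y => by simp only [Setoid.comap_rel, Equiv.symm_apply_apply]
  map_rel_iff' {r s} := by
    refine ⟨fun h x y hxy => ?_, fun h x y hxy => h hxy⟩
    change Setoid.comap e r ≤ Setoid.comap e s at h
    simpa only [Setoid.comap_rel, Equiv.apply_symm_apply] using
      @h (e.symm x) (e.symm y) (by rwa [Setoid.comap_rel, e.apply_symm_apply, e.apply_symm_apply])

lemma numBlocks_comap_equiv {m : ℕ} (e : Equiv.Perm (Fin m)) (σ : Setoid (Fin m)) :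
    numBlocks (Setoid.comap e σ) = numBlocks σ :=
  Nat.card_congr (Quotient.congr e fun _ _ => Iff.rfl)

lemma card_le_ker_eq_pow {α β : Type*} [Finite α] (r : Setoid α) :
    Nat.card {f : α → β // r ≤ Setoid.ker f} = Nat.card β ^ Nat.card (Quotient r) := by
  rw [Nat.card_congr (Setoid.liftEquiv r), Nat.card_fun]

lemma sPerm_val (n : ℕ) (i : Fin (2*n)) :
    (sPerm n i : ℕ) = if (i : ℕ) < n then 2*(i:ℕ) else 4*n - 2*(i:ℕ) - 1 := by
  rw [sPerm, Equiv.ofBijective_apply]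
  split_ifs <;> rfl

lemma comap_sPerm_intervalPP (n : ℕ) : Setoid.comap (sPerm n) (intervalPP n) = rainbow n := by
  ext i j
  change (sPerm n i : ℕ) / 2 = (sPerm n j : ℕ) / 2 ↔ i = j ∨ (i : ℕ) + j = 2*n - 1
  rw [sPerm_val, sPerm_val, Fin.ext_iff]
  have := i.2; have := j.2
  split_ifs <;> omega

lemma intervalPP_sup_permAct_sPerm (n : ℕ) (π : Setoid (Fin (2*n))) :
    intervalPP n ⊔ permAct (sPerm n) π = Setoid.comap (sPerm n).symm (π ⊔ rainbow n) := by
  have hinterval : Setoid.comap (sPerm n).symm (rainbow n) = intervalPP n := by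
    rw [← comap_sPerm_intervalPP]
    exact (Setoid.comapOrderIso (sPerm n)).symm_apply_apply (intervalPP n)
  rw [permAct, ← hinterval, sup_comm]
  exact ((Setoid.comapOrderIso (sPerm n).symm).map_sup π (rainbow n)).symm

lemma intervalPP_le_ker_iff {β : Type*} {n : ℕ} (I : Fin (2*n) → β) :
    intervalPP n ≤ Setoid.ker I ↔
      ∀ k : Fin n, I ⟨2*(k:ℕ), by omega⟩ = I ⟨2*(k:ℕ)+1, by omega⟩ := by
  refine ⟨fun h k => h (show 2*(k:ℕ) / 2 = (2*(k:ℕ)+1) / 2 by omega), fun h => ?_⟩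
  have hpair : ∀ i : Fin (2*n), I i = I ⟨2*((i:ℕ)/2), by omega⟩ := by
    intro i
    rcases Nat.mod_two_eq_zero_or_one i with heven | hodd
    · congr 1; ext; simp only; omega
    · rw [h ⟨i/2, by omega⟩]; congr 1; ext; simp only; omega
  intro i j (hij : (i : ℕ) / 2 = (j : ℕ) / 2)
  rw [Setoid.ker_def, hpair i, hpair j]
  simp only [hij]

/-- the number of tuples I with I(2k-1)=I(2k) which are
height-compatible with π equals d^{|π ∨ ρ_{2n}|}. -/
theorem stmt_5 (n d : ℕ) (π : Setoid (Fin (2*n))) :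
    Nat.card {I : Fin (2*n) → Fin d //
      (∀ k : Fin n, I ⟨2*(k:ℕ), by have := k.2; omega⟩ = I ⟨2*(k:ℕ)+1, by have := k.2; omega⟩) ∧
      (∀ h k : Fin (2*n), (permAct (sPerm n) π).r h k → I h = I k)} =
    d ^ numBlocks (π ⊔ rainbow n) := by
  calc _ = Nat.card {I : Fin (2*n) → Fin d // intervalPP n ⊔ permAct (sPerm n) π ≤ Setoid.ker I} :=
        Nat.card_congr <| Equiv.subtypeEquivRight fun I => by
          rw [sup_le_iff, intervalPP_le_ker_iff]; rfl
    _ = d ^ numBlocks (π ⊔ rainbow n) := by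
      rw [card_le_ker_eq_pow, Nat.card_fin, ← numBlocks, intervalPP_sup_permAct_sPerm,
        numBlocks_comap_equiv]
end

section
/- On the q-Fock space over ℂ^d with −1 < q < 1, for every v, w ∈ ℂ^d the commutator [L(v) + L*(v), R(w) + R*(w)] equals (⟨w,v⟩ − ⟨v,w⟩)·Q, where Q is the operator acting as multiplication by q^n on the n-th tensor component (ℂ^d)^{⊗n} and fixing the vacuum vector. -/
open scoped Classical

/-! ## The algebraic q-Fock space over ℂ^d
The algebraic direct sum ℂ ⊕ ⊕_{n≥1} (ℂ^d)^{⊗n} is identified with the free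
ℂ-module on the set of words `List (Fin d)` (a word w is the basis tensor
e_{w₁} ⊗ ... ⊗ e_{w_k}; the empty word is the vacuum vector). -/

abbrev FockB (d : ℕ) := List (Fin d) →₀ ℂ

/-- The vacuum vector. -/
noncomputable def fvac (d : ℕ) : FockB d := Finsupp.single [] 1

/-- Left creation operator L_i (prepend the basis vector e_i). -/
noncomputable def lCr (d : ℕ) (i : Fin d) : Module.End ℂ (FockB d) :=
  Finsupp.lmapDomain ℂ ℂ (fun w => i :: w)

/-- Right creation operator R_i (append the basis vector e_i). -/
noncomputable def rCr (d : ℕ) (i : Fin d) : Module.End ℂ (FockB d) :=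
  Finsupp.lmapDomain ℂ ℂ (fun w => w ++ [i])

/-- Left q-annihilation operator L_i* :
e_{w₁}⊗...⊗e_{w_k} ↦ Σ_j q^{j-1} ⟨e_{w_j}, e_i⟩ (tensor with j-th factor removed). -/
noncomputable def lAnn (d : ℕ) (q : ℂ) (i : Fin d) : Module.End ℂ (FockB d) :=
  Finsupp.lsum ℂ fun w => LinearMap.toSpanSingleton ℂ (FockB d)
    (∑ k ∈ Finset.range w.length,
      if w[k]? = some i then q ^ k • Finsupp.single (w.eraseIdx k) (1 : ℂ) else 0)

/-- Right q-annihilation operator R_i* (counting positions from the right). -/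
noncomputable def rAnn (d : ℕ) (q : ℂ) (i : Fin d) : Module.End ℂ (FockB d) :=
  Finsupp.lsum ℂ fun w => LinearMap.toSpanSingleton ℂ (FockB d)
    (∑ k ∈ Finset.range w.length,
      if w[w.length - 1 - k]? = some i then
        q ^ k • Finsupp.single (w.eraseIdx (w.length - 1 - k)) (1 : ℂ) else 0)

/-- The vacuum state φ_vac(X) = ⟨X ξ_vac, ξ_vac⟩ (= the coefficient of the empty
word in X ξ_vac). -/
noncomputable def vacState (d : ℕ) (X : Module.End ℂ (FockB d)) : ℂ :=
  (X (fvac d)) []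

/-- The operator T_{d;q} = Σ_i (L_i + L_i*) (R_i + R_i*). -/
noncomputable def TOpQ (d : ℕ) (q : ℂ) : Module.End ℂ (FockB d) :=
  ∑ i : Fin d, (lCr d i + lAnn d q i) * (rCr d i + rAnn d q i)

/-- Number of inversions of a permutation. -/
noncomputable def inversions {k : ℕ} (τ : Equiv.Perm (Fin k)) : ℕ :=
  Nat.card {p : Fin k × Fin k // p.1 < p.2 ∧ τ p.2 < τ p.1}

/-- The Bożejko–Speicher q-inner product of two basis words:
⟨e_{w₁}⊗...⊗e_{w_k}, e_{w'₁}⊗...⊗e_{w'_k}⟩_q = Σ_τ Π_j ⟨e_{w_j}, e_{w'_{τ(j)}}⟩ q^{ι(τ)}. -/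
noncomputable def qIP (d : ℕ) (q : ℂ) (w w' : List (Fin d)) : ℂ :=
  if h : w.length = w'.length then
    ∑ τ : Equiv.Perm (Fin w.length),
      (if ∀ j : Fin w.length, w.get j = w'.get (Fin.cast h (τ j))
       then q ^ inversions τ else 0)
  else 0

/-- The q-inner product on the algebraic q-Fock space (linear in the first variable). -/
noncomputable def qInnerF (d : ℕ) (q : ℂ) (x y : FockB d) : ℂ :=
  ∑ w ∈ x.support, ∑ w' ∈ y.support, x w * (starRingEnd ℂ) (y w') * qIP d q w w'

/-- Left creation operator L(v) for a general vector v ∈ ℂ^d. -/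
noncomputable def lCrV (d : ℕ) (v : Fin d → ℂ) : Module.End ℂ (FockB d) :=
  ∑ i : Fin d, v i • lCr d i

/-- Left q-annihilation operator L*(v) for a general vector v ∈ ℂ^d. -/
noncomputable def lAnnV (d : ℕ) (q : ℂ) (v : Fin d → ℂ) : Module.End ℂ (FockB d) :=
  ∑ i : Fin d, (starRingEnd ℂ) (v i) • lAnn d q i

/-- Right creation operator R(v) for a general vector v ∈ ℂ^d. -/
noncomputable def rCrV (d : ℕ) (v : Fin d → ℂ) : Module.End ℂ (FockB d) :=
  ∑ i : Fin d, v i • rCr d i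

/-- Right q-annihilation operator R*(v) for a general vector v ∈ ℂ^d. -/
noncomputable def rAnnV (d : ℕ) (q : ℂ) (v : Fin d → ℂ) : Module.End ℂ (FockB d) :=
  ∑ i : Fin d, (starRingEnd ℂ) (v i) • rAnn d q i

/-- The inner product of ℂ^d (linear in the first variable). -/
noncomputable def cInner (d : ℕ) (v w : Fin d → ℂ) : ℂ :=
  ∑ i : Fin d, v i * (starRingEnd ℂ) (w i)

/-- The operator Q, acting as q^n on the n-th tensor component and fixing the vacuum. -/
noncomputable def Qop (d : ℕ) (q : ℂ) : Module.End ℂ (FockB d) :=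
  Finsupp.lsum ℂ fun w => LinearMap.toSpanSingleton ℂ (FockB d)
    (q ^ w.length • Finsupp.single w (1 : ℂ))

lemma lCr_single (d : ℕ) (i : Fin d) (u : List (Fin d)) (c : ℂ) :
    lCr d i (Finsupp.single u c) = Finsupp.single (i :: u) c := by
  simp [lCr, Finsupp.mapDomain_single]
lemma rCr_single (d : ℕ) (i : Fin d) (u : List (Fin d)) (c : ℂ) :
    rCr d i (Finsupp.single u c) = Finsupp.single (u ++ [i]) c := by
  simp [rCr, Finsupp.mapDomain_single]
lemma lAnn_single (d : ℕ) (q : ℂ) (i : Fin d) (u : List (Fin d)) (c : ℂ) :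
    lAnn d q i (Finsupp.single u c) =
      ∑ k ∈ Finset.range u.length,
        if u[k]? = some i then (c * q ^ k) • Finsupp.single (u.eraseIdx k) (1:ℂ) else 0 := by
  simp [lAnn, Finsupp.lsum_single, LinearMap.toSpanSingleton_apply, Finset.smul_sum,
    smul_ite, smul_smul]
lemma rAnn_single (d : ℕ) (q : ℂ) (i : Fin d) (u : List (Fin d)) (c : ℂ) :
    rAnn d q i (Finsupp.single u c) =
      ∑ k ∈ Finset.range u.length,
        if u[u.length - 1 - k]? = some i then
          (c * q ^ k) • Finsupp.single (u.eraseIdx (u.length - 1 - k)) (1:ℂ) else 0 := by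
  simp [rAnn, Finsupp.lsum_single, LinearMap.toSpanSingleton_apply, Finset.smul_sum,
    smul_ite, smul_smul]
lemma Qop_single (d : ℕ) (q : ℂ) (u : List (Fin d)) (c : ℂ) :
    Qop d q (Finsupp.single u c) = (c * q ^ u.length) • Finsupp.single u (1:ℂ) := by
  simp [Qop, Finsupp.lsum_single, LinearMap.toSpanSingleton_apply, smul_smul]
lemma eraseIdx_eraseIdx_of_lt {α : Type*} (l : List α) (a b : ℕ) (h : a < b) :
    (l.eraseIdx b).eraseIdx a = (l.eraseIdx a).eraseIdx (b - 1) := by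
  induction l generalizing a b with
  | nil => simp
  | cons x l ih =>
    obtain ⟨b, rfl⟩ : ∃ b', b = b' + 1 := ⟨b - 1, by omega⟩
    rcases a with _ | a
    · simp
    · obtain ⟨b, rfl⟩ : ∃ b', b = b' + 1 := ⟨b - 1, by omega⟩
      simp only [List.eraseIdx_cons_succ, Nat.add_sub_cancel]
      rw [ih a (b+1) (by omega)]
      simp
lemma comm_C (d : ℕ) (q : ℂ) (i j : Fin d) :
    rAnn d q j * lCr d i = lCr d i * rAnn d q j + (if i = j then (1:ℂ) else 0) • Qop d q := by
  apply Finsupp.lhom_ext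
  intro u c
  simp only [LinearMap.add_apply, Module.End.mul_apply, LinearMap.smul_apply]
  rw [lCr_single, rAnn_single, rAnn_single, map_sum, Qop_single]
  simp only [List.length_cons]
  rw [Finset.sum_range_succ]
  have h0 : u.length + 1 - 1 - u.length = 0 := by omega
  rw [h0]
  simp only [List.getElem?_cons_zero, List.eraseIdx_cons_zero]
  have hcongr : ∀ k ∈ Finset.range u.length,
      (if (i :: u)[u.length + 1 - 1 - k]? = some j then
          (c * q ^ k) • Finsupp.single ((i :: u).eraseIdx (u.length + 1 - 1 - k)) (1:ℂ) else 0)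
      = lCr d i (if u[u.length - 1 - k]? = some j then
          (c * q ^ k) • Finsupp.single (u.eraseIdx (u.length - 1 - k)) (1:ℂ) else 0) := by
    intro k hk
    rw [Finset.mem_range] at hk
    have h1 : u.length + 1 - 1 - k = (u.length - 1 - k) + 1 := by omega
    rw [h1, List.getElem?_cons_succ, List.eraseIdx_cons_succ]
    split_ifs
    · rw [map_smul, lCr_single]
    · rw [map_zero]
  rw [Finset.sum_congr rfl hcongr]
  congr 1
  by_cases h : i = j
  · subst h; simp
  · simp [h, Ne.symm h]
lemma comm_D (d : ℕ) (q : ℂ) (i j : Fin d) :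
    lAnn d q i * rCr d j = rCr d j * lAnn d q i + (if i = j then (1:ℂ) else 0) • Qop d q := by
  apply Finsupp.lhom_ext
  intro u c
  simp only [LinearMap.add_apply, Module.End.mul_apply, LinearMap.smul_apply]
  rw [rCr_single, lAnn_single, lAnn_single, map_sum, Qop_single]
  simp only [List.length_append, List.length_singleton]
  rw [Finset.sum_range_succ]
  rw [List.getElem?_append_right (le_refl u.length),
      List.eraseIdx_append_of_length_le (le_refl u.length)]
  simp only [Nat.sub_self, List.getElem?_cons_zero, List.eraseIdx_cons_zero, List.append_nil,
    List.eraseIdx_nil]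
  have hcongr : ∀ k ∈ Finset.range u.length,
      (if (u ++ [j])[k]? = some i then
          (c * q ^ k) • Finsupp.single ((u ++ [j]).eraseIdx k) (1:ℂ) else 0)
      = rCr d j (if u[k]? = some i then
          (c * q ^ k) • Finsupp.single (u.eraseIdx k) (1:ℂ) else 0) := by
    intro k hk
    rw [Finset.mem_range] at hk
    rw [List.getElem?_append_left (by omega), List.eraseIdx_append_of_lt_length hk]
    split_ifs
    · rw [map_smul, rCr_single]
    · rw [map_zero]
  rw [Finset.sum_congr rfl hcongr]
  congr 1
  by_cases h : i = j
  · subst h; simp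
  · simp [h, Ne.symm h]
lemma comm_B (d : ℕ) (q : ℂ) (i j : Fin d) :
    lAnn d q i * rAnn d q j = rAnn d q j * lAnn d q i := by
  apply Finsupp.lhom_ext
  intro u c
  set n := u.length with hn
  simp only [Module.End.mul_apply]
  have hL : lAnn d q i (rAnn d q j (Finsupp.single u c)) =
      ∑ x ∈ Finset.range n ×ˢ Finset.range (n-1),
        (if u[n-1-x.1]? = some j ∧ (u.eraseIdx (n-1-x.1))[x.2]? = some i
         then (c * q ^ (x.1 + x.2)) • Finsupp.single ((u.eraseIdx (n-1-x.1)).eraseIdx x.2) (1:ℂ)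
         else 0) := by
    rw [rAnn_single, map_sum, Finset.sum_product]
    refine Finset.sum_congr rfl fun k hk => ?_
    rw [Finset.mem_range] at hk
    have hlen : (u.eraseIdx (n-1-k)).length = n - 1 := by
      rw [List.length_eraseIdx, if_pos (by omega)]
    by_cases hj : u[n-1-k]? = some j
    · rw [if_pos hj, map_smul, lAnn_single, hlen, Finset.smul_sum]
      refine Finset.sum_congr rfl fun m hm => ?_
      rw [smul_ite, smul_zero, smul_smul]
      exact if_congr (by simp [hj, ← hn]) (by rw [one_mul, mul_assoc, ← pow_add]) rfl
    · rw [if_neg hj, map_zero]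
      exact (Finset.sum_eq_zero fun m hm => if_neg (by tauto)).symm
  have hR : rAnn d q j (lAnn d q i (Finsupp.single u c)) =
      ∑ y ∈ Finset.range n ×ˢ Finset.range (n-1),
        (if u[y.1]? = some i ∧ (u.eraseIdx y.1)[n-2-y.2]? = some j
         then (c * q ^ (y.1 + y.2)) • Finsupp.single ((u.eraseIdx y.1).eraseIdx (n-2-y.2)) (1:ℂ)
         else 0) := by
    rw [lAnn_single, map_sum, Finset.sum_product]
    refine Finset.sum_congr rfl fun m hm => ?_
    rw [Finset.mem_range] at hm
    have hlen : (u.eraseIdx m).length = n - 1 := by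
      rw [List.length_eraseIdx, if_pos (by omega)]
    by_cases hi : u[m]? = some i
    · rw [if_pos hi, map_smul, rAnn_single, hlen, Finset.smul_sum]
      refine Finset.sum_congr rfl fun k hk => ?_
      rw [Finset.mem_range] at hk
      rw [smul_ite, smul_zero, smul_smul, show n - 1 - 1 - k = n - 2 - k by omega]
      exact if_congr (by simp [hi]) (by rw [one_mul, mul_assoc, ← pow_add]) rfl
    · rw [if_neg hi, map_zero]
      exact (Finset.sum_eq_zero fun k hk => if_neg (by tauto)).symm
  rw [hL, hR]
  refine Finset.sum_nbij'
    (fun x => if x.2 < n - 1 - x.1 then (x.2, x.1) else (x.2 + 1, x.1 - 1))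
    (fun y => if n - 2 - y.2 < y.1 then (y.2 + 1, y.1 - 1) else (y.2, y.1))
    ?_ ?_ ?_ ?_ ?_
  · rintro ⟨k, m⟩ hx
    simp only [Finset.mem_product, Finset.mem_range] at hx ⊢
    split_ifs <;> omega
  · rintro ⟨m, k⟩ hy
    simp only [Finset.mem_product, Finset.mem_range] at hy ⊢
    split_ifs <;> omega
  · rintro ⟨k, m⟩ hx
    simp only [Finset.mem_product, Finset.mem_range] at hx
    dsimp only
    by_cases hc : m < n - 1 - k
    · rw [if_pos hc]; rw [if_neg (by omega)]
    · rw [if_neg hc]; rw [if_pos (by omega)]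
      simp only [Prod.mk.injEq]; omega
  · rintro ⟨m, k⟩ hy
    simp only [Finset.mem_product, Finset.mem_range] at hy
    dsimp only
    by_cases hc : n - 2 - k < m
    · rw [if_pos hc]; rw [if_neg (by omega)]
      simp only [Prod.mk.injEq]; omega
    · rw [if_neg hc]; rw [if_pos (by omega)]
  · rintro ⟨k, m⟩ hx
    simp only [Finset.mem_product, Finset.mem_range] at hx
    obtain ⟨hk, hm⟩ := hx
    dsimp only
    by_cases hc : m < n - 1 - k
    · rw [if_pos hc]
      dsimp only
      have e1 : (u.eraseIdx (n-1-k))[m]? = u[m]? := by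
        rw [List.getElem?_eraseIdx, if_pos hc]
      have e2 : (u.eraseIdx m)[n-2-k]? = u[n-1-k]? := by
        rw [List.getElem?_eraseIdx, if_neg (by omega)]
        congr 1; omega
      have e3 : (u.eraseIdx (n-1-k)).eraseIdx m = (u.eraseIdx m).eraseIdx (n-2-k) := by
        rw [eraseIdx_eraseIdx_of_lt u m (n-1-k) hc]
        congr 1; omega
      rw [e1, e2, e3, add_comm k m]
      exact if_congr and_comm rfl rfl
    · rw [if_neg hc]
      dsimp only
      have hk1 : 1 ≤ k := by omega
      have e1 : (u.eraseIdx (n-1-k))[m]? = u[m+1]? := by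
        rw [List.getElem?_eraseIdx, if_neg hc]
      have e2 : (u.eraseIdx (m+1))[n-2-(k-1)]? = u[n-1-k]? := by
        rw [show n-2-(k-1) = n-1-k by omega, List.getElem?_eraseIdx, if_pos (by omega)]
      have e3 : (u.eraseIdx (m+1)).eraseIdx (n-2-(k-1)) = (u.eraseIdx (n-1-k)).eraseIdx m := by
        rw [show n-2-(k-1) = n-1-k by omega,
          eraseIdx_eraseIdx_of_lt u (n-1-k) (m+1) (by omega)]
        simp
      rw [e1, e2, e3, show (m+1)+(k-1) = k + m by omega]
      exact if_congr and_comm rfl rfl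
lemma comm_A (d : ℕ) (i j : Fin d) : lCr d i * rCr d j = rCr d j * lCr d i := by
  apply Finsupp.lhom_ext
  intro u c
  simp [Module.End.mul_apply, lCr_single, rCr_single]
lemma sum_smul_mul (d : ℕ) {ι κ : Type*} (s : Finset ι) (t : Finset κ)
    (a : ι → ℂ) (b : κ → ℂ) (f : ι → Module.End ℂ (FockB d)) (g : κ → Module.End ℂ (FockB d)) :
    (∑ i ∈ s, a i • f i) * (∑ j ∈ t, b j • g j)
      = ∑ i ∈ s, ∑ j ∈ t, (a i * b j) • (f i * g j) := by
  rw [Finset.sum_mul]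
  refine Finset.sum_congr rfl fun i _ => ?_
  rw [Finset.mul_sum]
  refine Finset.sum_congr rfl fun j _ => ?_
  rw [smul_mul_assoc, mul_smul_comm, smul_smul]
lemma hV1 (d : ℕ) (v w : Fin d → ℂ) : lCrV d v * rCrV d w = rCrV d w * lCrV d v := by
  rw [lCrV, rCrV, sum_smul_mul, sum_smul_mul, Finset.sum_comm]
  exact Finset.sum_congr rfl fun i _ => Finset.sum_congr rfl fun j _ => by
    rw [comm_A, mul_comm]
lemma hV2 (d : ℕ) (q : ℂ) (v w : Fin d → ℂ) :
    lAnnV d q v * rAnnV d q w = rAnnV d q w * lAnnV d q v := by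
  rw [lAnnV, rAnnV, sum_smul_mul, sum_smul_mul, Finset.sum_comm]
  exact Finset.sum_congr rfl fun i _ => Finset.sum_congr rfl fun j _ => by
    rw [comm_B, mul_comm]
lemma hV3 (d : ℕ) (q : ℂ) (v w : Fin d → ℂ) :
    rAnnV d q w * lCrV d v = lCrV d v * rAnnV d q w + cInner d v w • Qop d q := by
  rw [rAnnV, lCrV, sum_smul_mul, sum_smul_mul]
  have step : ∀ j ∈ Finset.univ, ∀ i ∈ (Finset.univ : Finset (Fin d)),
      ((starRingEnd ℂ) (w j) * v i) • (rAnn d q j * lCr d i)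
        = (v i * (starRingEnd ℂ) (w j)) • (lCr d i * rAnn d q j)
          + (if i = j then v i * (starRingEnd ℂ) (w i) else 0) • Qop d q := by
    intro j _ i _
    rw [comm_C, smul_add, mul_comm, smul_smul, mul_ite, mul_one, mul_zero]
    congr 1
    split_ifs with h
    · subst h; rfl
    · rfl
  rw [Finset.sum_congr rfl (fun j hj => Finset.sum_congr rfl (step j hj)),
    ]
  simp only [Finset.sum_add_distrib]
  rw [Finset.sum_comm]
  congr 1
  simp only [ite_smul, zero_smul, Finset.sum_ite_eq', Finset.mem_univ, if_true]
  rw [← Finset.sum_smul, cInner]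
lemma hV4 (d : ℕ) (q : ℂ) (v w : Fin d → ℂ) :
    lAnnV d q v * rCrV d w = rCrV d w * lAnnV d q v + cInner d w v • Qop d q := by
  rw [lAnnV, rCrV, sum_smul_mul, sum_smul_mul]
  have step : ∀ i ∈ Finset.univ, ∀ j ∈ (Finset.univ : Finset (Fin d)),
      ((starRingEnd ℂ) (v i) * w j) • (lAnn d q i * rCr d j)
        = (w j * (starRingEnd ℂ) (v i)) • (rCr d j * lAnn d q i)
          + (if j = i then w j * (starRingEnd ℂ) (v j) else 0) • Qop d q := by
    intro i _ j _
    rw [comm_D, smul_add, mul_comm, smul_smul, mul_ite, mul_one, mul_zero]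
    congr 1
    split_ifs with h h2 h2
    · subst h2; rfl
    · exact absurd h.symm h2
    · exact absurd h2.symm h
    · rfl
  rw [Finset.sum_congr rfl (fun i hi => Finset.sum_congr rfl (step i hi))]
  simp only [Finset.sum_add_distrib]
  rw [Finset.sum_comm]
  congr 1
  simp only [ite_smul, zero_smul, Finset.sum_ite_eq', Finset.mem_univ, if_true]
  rw [← Finset.sum_smul, cInner]

/-- [L(v)+L*(v), R(w)+R*(w)] = (⟨w,v⟩ − ⟨v,w⟩)·Q. -/
theorem stmt_11 (d : ℕ) (q : ℝ) (hq1 : -1 < q) (hq2 : q < 1) (v w : Fin d → ℂ) :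
    (lCrV d v + lAnnV d (q : ℂ) v) * (rCrV d w + rAnnV d (q : ℂ) w)
      - (rCrV d w + rAnnV d (q : ℂ) w) * (lCrV d v + lAnnV d (q : ℂ) v)
    = (cInner d w v - cInner d v w) • Qop d (q : ℂ) := by
  simp only [add_mul, mul_add]
  rw [hV1, hV2, hV3, hV4,
    show (cInner d w v - cInner d v w) • Qop d (q:ℂ)
      = cInner d w v • Qop d (q:ℂ) - cInner d v w • Qop d (q:ℂ)
      from by exact sub_smul (cInner d w v) (cInner d v w) (Qop d (q:ℂ))]
  abel
end

section
/- For d ∈ ℕ, q ∈ (−1,1) and n ∈ ℕ, the n-th moment of X_{d;q} := (Σ_{i=1}^d (L_{i;q}+L_{i;q}*) ⊗ (L_{i;q}+L_{i;q}*))² with respect to the state φ_vac ⊗ φ_vac equals Σ_{π,σ ∈ P₂(2n)} d^{|π∨σ|} q^{cr(π)+cr(σ)}. -/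
open scoped Classical

open TensorProduct in
/-- The operator X_{d;q} = (Σ_i (L_i+L_i*) ⊗ (L_i+L_i*))². -/
noncomputable def Xop (d : ℕ) (q : ℂ) : Module.End ℂ (FockB d ⊗[ℂ] FockB d) :=
  (∑ i : Fin d, TensorProduct.map (lCr d i + lAnn d q i) (lCr d i + lAnn d q i)) ^ 2

open TensorProduct in
/-- The state φ_vac ⊗ φ_vac on B(T_{d;q}) ⊗ B(T_{d;q}). -/
noncomputable def vacState2 (d : ℕ) (X : Module.End ℂ (FockB d ⊗[ℂ] FockB d)) : ℂ :=
  (TensorProduct.lid ℂ ℂ)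
    ((TensorProduct.map (Finsupp.lapply ([] : List (Fin d)))
        (Finsupp.lapply ([] : List (Fin d)))) (X (fvac d ⊗ₜ fvac d)))


namespace S14

instance : IsAntisymm ℕ (· > ·) := ⟨fun _ _ h1 h2 => absurd h2 (lt_asymm h1)⟩

noncomputable def descList (s : Finset ℕ) : List ℕ := (s.sort (· ≤ ·)).reverse

lemma descList_sorted (s : Finset ℕ) : List.Pairwise (· > ·) (descList s) := by
  rw [descList, List.pairwise_reverse]
  exact s.sortedLT_sort.pairwise

lemma mem_descList {s : Finset ℕ} {a : ℕ} : a ∈ descList s ↔ a ∈ s := by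
  simp [descList, Finset.mem_sort]

lemma descList_nodup (s : Finset ℕ) : (descList s).Nodup := by
  rw [descList, List.nodup_reverse]; exact s.sort_nodup _

lemma length_descList (s : Finset ℕ) : (descList s).length = s.card := by
  simp [descList, Finset.length_sort]

lemma descList_perm_toList (s : Finset ℕ) : (descList s).Perm s.toList := by
  refine List.perm_of_nodup_nodup_toFinset_eq (descList_nodup s) s.nodup_toList ?_
  ext x; simp [mem_descList, Finset.mem_toList]

lemma descList_eq_nil {s : Finset ℕ} : descList s = [] ↔ s = ∅ := by
  constructor
  · intro h
    have := length_descList s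
    rw [h] at this
    exact Finset.card_eq_zero.mp this.symm
  · rintro rfl; simp [descList]

lemma countP_filter (s : Finset ℕ) (p : ℕ → Prop) [DecidablePred p] :
    (descList s).countP (fun c => decide (p c)) = (s.filter p).card := by
  rw [(descList_perm_toList s).countP_eq, ← Multiset.coe_countP, Finset.coe_toList,
    Multiset.countP_eq_card_filter]
  rfl


lemma count_gt_sorted : ∀ (l : List ℕ), l.Pairwise (· > ·) → ∀ (k : ℕ) (hk : k < l.length),
    l.countP (fun c => decide (l.get ⟨k, hk⟩ < c)) = k := by
  intro l
  induction l with
  | nil => intro _ k hk; simp at hk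
  | cons x xs ih =>
    intro hp k hk
    have hx : ∀ y ∈ xs, x > y := fun y hy => (List.pairwise_cons.mp hp).1 y hy
    have hxs := (List.pairwise_cons.mp hp).2
    cases k with
    | zero =>
      simp only [List.get, List.countP_cons]
      rw [List.countP_eq_zero.mpr]
      · simp
      · intro c hc
        simp only [decide_eq_true_eq]
        exact not_lt.mpr (le_of_lt (hx c hc))
    | succ k =>
      have hk' : k < xs.length := by simpa using hk
      have hmem : xs.get ⟨k, hk'⟩ ∈ xs := xs.get_mem ⟨k, hk'⟩
      have hlt : xs.get ⟨k, hk'⟩ < x := hx _ hmem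
      simp only [List.get, List.countP_cons]
      rw [ih hxs k hk']
      simp only [List.get_eq_getElem] at hlt
      simp [hlt]

lemma rank_get (s : Finset ℕ) (k : ℕ) (hk : k < (descList s).length) :
    (s.filter (fun c => (descList s).get ⟨k, hk⟩ < c)).card = k := by
  rw [← countP_filter]
  exact count_gt_sorted _ (descList_sorted s) k hk

lemma get_mem_descList (s : Finset ℕ) (k : ℕ) (hk : k < (descList s).length) :
    (descList s).get ⟨k, hk⟩ ∈ s :=
  mem_descList.mp ((descList s).get_mem ⟨k, hk⟩)

lemma descList_eraseIdx (s : Finset ℕ) (k : ℕ) (hk : k < (descList s).length) :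
    descList (s.erase ((descList s).get ⟨k, hk⟩)) = (descList s).eraseIdx k := by
  set a := (descList s).get ⟨k, hk⟩ with ha
  refine List.Perm.eq_of_pairwise' (r := (· > ·)) (descList_sorted _)
    (List.Pairwise.sublist (List.eraseIdx_sublist _ _) (descList_sorted s)) ?_
  refine List.perm_of_nodup_nodup_toFinset_eq (descList_nodup _)
    (List.Nodup.sublist (List.eraseIdx_sublist _ _) (descList_nodup s)) ?_
  have hperm : ((descList s).erase a).Perm ((descList s).eraseIdx k) := by
    have := List.erase_getElem (l := descList s) (i := k) hk
    simpa [ha] using this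
  ext x
  simp only [List.mem_toFinset, mem_descList, Finset.mem_erase, ← hperm.mem_iff,
    (descList_nodup s).mem_erase_iff, mem_descList]

lemma exists_get_of_mem {s : Finset ℕ} {a : ℕ} (ha : a ∈ s) :
    ∃ (k : ℕ) (hk : k < (descList s).length), (descList s).get ⟨k, hk⟩ = a := by
  have : a ∈ descList s := mem_descList.mpr ha
  rcases List.mem_iff_get.mp this with ⟨⟨k, hk⟩, h⟩
  exact ⟨k, hk, h⟩


variable {d : ℕ}

def isConf (I : ℕ → Fin d) (t : ℕ) (P : Finset (ℕ × ℕ)) : Prop :=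
  (∀ p ∈ P, p.1 < p.2 ∧ p.2 < t ∧ I p.1 = I p.2) ∧
  ∀ p ∈ P, ∀ p' ∈ P, p ≠ p' → p.1 ≠ p'.1 ∧ p.1 ≠ p'.2 ∧ p.2 ≠ p'.1 ∧ p.2 ≠ p'.2

noncomputable def confs (I : ℕ → Fin d) (t : ℕ) : Finset (Finset (ℕ × ℕ)) :=
  (Finset.range t ×ˢ Finset.range t).powerset.filter (isConf I t)

lemma mem_confs {I : ℕ → Fin d} {t : ℕ} {P : Finset (ℕ × ℕ)} :
    P ∈ confs I t ↔ isConf I t P := by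
  simp only [confs, Finset.mem_filter, Finset.mem_powerset, and_iff_right_iff_imp]
  intro h p hp
  have := h.1 p hp
  simp only [Finset.mem_product, Finset.mem_range]
  omega

def covered (P : Finset (ℕ × ℕ)) (x : ℕ) : Prop := ∃ p ∈ P, x = p.1 ∨ x = p.2

noncomputable def opensF (P : Finset (ℕ × ℕ)) (t : ℕ) : Finset ℕ :=
  (Finset.range t).filter (fun x => ¬ covered P x)

noncomputable def wordOf (I : ℕ → Fin d) (P : Finset (ℕ × ℕ)) (t : ℕ) : List (Fin d) :=
  (descList (opensF P t)).map I

noncomputable def cPP (P : Finset (ℕ × ℕ)) : ℕ :=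
  ((P ×ˢ P).filter (fun pp => pp.1.1 < pp.2.1 ∧ pp.2.1 < pp.1.2 ∧ pp.1.2 < pp.2.2)).card

noncomputable def cPO (P : Finset (ℕ × ℕ)) (t : ℕ) : ℕ :=
  ((P ×ˢ opensF P t).filter (fun pc => pc.1.1 < pc.2 ∧ pc.2 < pc.1.2)).card

noncomputable def cW (P : Finset (ℕ × ℕ)) (t : ℕ) : ℕ := cPP P + cPO P t

lemma cPP_eq_sum (P : Finset (ℕ × ℕ)) :
    cPP P = ∑ p ∈ P, ∑ p' ∈ P,
      (if p.1 < p'.1 ∧ p'.1 < p.2 ∧ p.2 < p'.2 then 1 else 0) := by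
  rw [cPP, Finset.card_filter, Finset.sum_product]

lemma cPO_eq_sum (P : Finset (ℕ × ℕ)) (t : ℕ) :
    cPO P t = ∑ p ∈ P, ∑ c ∈ opensF P t,
      (if p.1 < c ∧ c < p.2 then 1 else 0) := by
  rw [cPO, Finset.card_filter, Finset.sum_product]

lemma not_covered_top {I : ℕ → Fin d} {t : ℕ} {P : Finset (ℕ × ℕ)}
    (hP : isConf I t P) : ¬ covered P t := by
  rintro ⟨p, hp, h | h⟩ <;> have := hP.1 p hp <;> omega

lemma opensF_succ {I : ℕ → Fin d} {t : ℕ} {P : Finset (ℕ × ℕ)}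
    (hP : isConf I t P) : opensF P (t+1) = insert t (opensF P t) := by
  ext x
  simp only [opensF, Finset.mem_filter, Finset.mem_range, Finset.mem_insert]
  constructor
  · rintro ⟨hx, hc⟩
    rcases Nat.lt_succ_iff_lt_or_eq.mp hx with h | rfl
    · exact Or.inr ⟨h, hc⟩
    · exact Or.inl rfl
  · rintro (rfl | ⟨hx, hc⟩)
    · exact ⟨Nat.lt_succ_self _, not_covered_top hP⟩
    · exact ⟨Nat.lt_succ_of_lt hx, hc⟩

lemma mem_opensF {P : Finset (ℕ × ℕ)} {t x : ℕ} :
    x ∈ opensF P t ↔ x < t ∧ ¬ covered P x := by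
  simp [opensF]

lemma covered_insert {P : Finset (ℕ × ℕ)} {a t x : ℕ} :
    covered (insert (a,t) P) x ↔ x = a ∨ x = t ∨ covered P x := by
  constructor
  · rintro ⟨p, hp, h⟩
    rcases Finset.mem_insert.mp hp with rfl | hp
    · rcases h with h | h
      · exact Or.inl h
      · exact Or.inr (Or.inl h)
    · exact Or.inr (Or.inr ⟨p, hp, h⟩)
  · rintro (rfl | rfl | ⟨p, hp, h⟩)
    · exact ⟨(x,t), Finset.mem_insert_self _ _, Or.inl rfl⟩
    · exact ⟨(a,x), Finset.mem_insert_self _ _, Or.inr rfl⟩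
    · exact ⟨p, Finset.mem_insert_of_mem hp, h⟩

lemma opensF_insert {I : ℕ → Fin d} {t a : ℕ} {P : Finset (ℕ × ℕ)}
    (hP : isConf I t P) (ha : a ∈ opensF P t) :
    opensF (insert (a,t) P) (t+1) = (opensF P t).erase a := by
  ext x
  simp only [mem_opensF, covered_insert, Finset.mem_erase, mem_opensF] at *
  constructor
  · rintro ⟨hx, hc⟩
    push_neg at hc
    exact ⟨hc.1, by omega, hc.2.2⟩
  · rintro ⟨hxa, hx, hc⟩
    refine ⟨by omega, ?_⟩
    push_neg
    exact ⟨hxa, by omega, hc⟩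

lemma isConf_mono {I : ℕ → Fin d} {t : ℕ} {P : Finset (ℕ × ℕ)}
    (hP : isConf I t P) : isConf I (t+1) P :=
  ⟨fun p hp => by have := hP.1 p hp; exact ⟨this.1, by omega, this.2.2⟩, hP.2⟩

lemma isConf_insert {I : ℕ → Fin d} {t a : ℕ} {P : Finset (ℕ × ℕ)}
    (hP : isConf I t P) (ha : a ∈ opensF P t) (hIa : I a = I t) :
    isConf I (t+1) (insert (a,t) P) := by
  have haP : ¬ covered P a := (mem_opensF.mp ha).2
  have hat : a < t := (mem_opensF.mp ha).1
  constructor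
  · rintro p hp
    rcases Finset.mem_insert.mp hp with rfl | hp
    · exact ⟨hat, Nat.lt_succ_self _, hIa⟩
    · have := hP.1 p hp; exact ⟨this.1, by omega, this.2.2⟩
  · rintro p hp p' hp' hne
    rcases Finset.mem_insert.mp hp with rfl | hp <;>
      rcases Finset.mem_insert.mp hp' with h' | hp'
    · exact absurd h'.symm hne
    · have hb := hP.1 p' hp'
      refine ⟨fun h => haP ⟨p', hp', Or.inl h⟩, fun h => haP ⟨p', hp', Or.inr h⟩, ?_, ?_⟩ <;> omega
    · subst h'
      have hb := hP.1 p hp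
      refine ⟨fun h => haP ⟨p, hp, Or.inl h.symm⟩, ?_, fun h => haP ⟨p, hp, Or.inr h.symm⟩, ?_⟩ <;> omega
    · exact hP.2 p hp p' hp' hne

lemma pair_not_mem {I : ℕ → Fin d} {t a : ℕ} {P : Finset (ℕ × ℕ)}
    (hP : isConf I t P) : (a, t) ∉ P := fun h => by have := hP.1 _ h; omega

lemma cW_succ {I : ℕ → Fin d} {t : ℕ} {P : Finset (ℕ × ℕ)}
    (hP : isConf I t P) : cW P (t+1) = cW P t := by
  unfold cW
  congr 1
  rw [cPO_eq_sum, cPO_eq_sum, opensF_succ hP]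
  refine Finset.sum_congr rfl fun p hp => ?_
  rw [Finset.sum_insert (by simp [mem_opensF])]
  have := hP.1 p hp
  rw [if_neg (by omega), zero_add]

lemma cW_insert {I : ℕ → Fin d} {t a : ℕ} {P : Finset (ℕ × ℕ)}
    (hP : isConf I t P) (ha : a ∈ opensF P t) :
    cW (insert (a,t) P) (t+1)
      = cW P t + ((opensF P t).filter (fun c => a < c)).card := by
  have hnm : (a,t) ∉ P := pair_not_mem hP
  have hat : a < t := (mem_opensF.mp ha).1
  have hPP : cPP (insert (a,t) P)
      = cPP P + ∑ p ∈ P, (if p.1 < a ∧ a < p.2 then 1 else 0) := by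
    rw [cPP_eq_sum, Finset.sum_insert hnm]
    have h0 : ∑ p' ∈ insert (a,t) P,
        (if a < p'.1 ∧ p'.1 < t ∧ t < p'.2 then (1:ℕ) else 0) = 0 := by
      rw [Finset.sum_insert hnm, if_neg (by omega)]
      rw [zero_add]
      refine Finset.sum_eq_zero fun p hp => ?_
      have := hP.1 p hp
      rw [if_neg (by omega)]
    rw [h0, zero_add]
    have hrow : ∀ p ∈ P, (∑ p' ∈ insert (a,t) P,
        if p.1 < p'.1 ∧ p'.1 < p.2 ∧ p.2 < p'.2 then (1:ℕ) else 0)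
        = (if p.1 < a ∧ a < p.2 then 1 else 0)
          + ∑ p' ∈ P, (if p.1 < p'.1 ∧ p'.1 < p.2 ∧ p.2 < p'.2 then 1 else 0) := by
      intro p hp
      rw [Finset.sum_insert hnm]
      congr 1
      have := hP.1 p hp
      by_cases h : p.1 < a ∧ a < p.2
      · rw [if_pos (by omega), if_pos h]
      · rw [if_neg (by omega), if_neg h]
    rw [Finset.sum_congr rfl hrow, Finset.sum_add_distrib, cPP_eq_sum]
    omega
  have hPO' : cPO (insert (a,t) P) (t+1)
      = ((opensF P t).filter (fun c => a < c)).card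
        + ∑ p ∈ P, ∑ c ∈ (opensF P t).erase a, (if p.1 < c ∧ c < p.2 then (1:ℕ) else 0) := by
    rw [cPO_eq_sum, opensF_insert hP ha, Finset.sum_insert hnm]
    congr 1
    have : ∀ c ∈ (opensF P t).erase a,
        (if (a,t).1 < c ∧ c < (a,t).2 then (1:ℕ) else 0) = (if a < c then 1 else 0) := by
      intro c hc
      have := mem_opensF.mp (Finset.mem_of_mem_erase hc)
      simp only []
      by_cases h : a < c
      · rw [if_pos ⟨h, by omega⟩, if_pos h]
      · rw [if_neg (by omega), if_neg h]
    rw [Finset.sum_congr rfl this, ← Finset.card_filter, Finset.filter_erase,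
      Finset.erase_eq_of_notMem (by simp)]
  have hPO : cPO P t
      = (∑ p ∈ P, (if p.1 < a ∧ a < p.2 then (1:ℕ) else 0))
        + ∑ p ∈ P, ∑ c ∈ (opensF P t).erase a, (if p.1 < c ∧ c < p.2 then (1:ℕ) else 0) := by
    rw [cPO_eq_sum, ← Finset.sum_add_distrib]
    refine Finset.sum_congr rfl fun p hp => ?_
    conv_lhs => rw [← Finset.insert_erase ha]
    rw [Finset.sum_insert (Finset.notMem_erase a _)]
  unfold cW
  omega


lemma get_rank {s : Finset ℕ} {a : ℕ} (ha : a ∈ s) :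
    ∃ hk : (s.filter (fun c => a < c)).card < (descList s).length,
      (descList s).get ⟨(s.filter (fun c => a < c)).card, hk⟩ = a := by
  obtain ⟨k, hk, hget⟩ := exists_get_of_mem ha
  have hr : (s.filter (fun c => a < c)).card = k := by rw [← hget]; exact rank_get s k hk
  subst hr
  exact ⟨hk, hget⟩

lemma descList_insert_top {s : Finset ℕ} {t : ℕ} (h : ∀ x ∈ s, x < t) :
    descList (insert t s) = t :: descList s := by
  refine (fun hp hs => List.Perm.eq_of_pairwise' (r := (· > ·)) (descList_sorted _) hs hp) ?_ ?_
  · refine List.perm_of_nodup_nodup_toFinset_eq (descList_nodup _) ?_ ?_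
    · exact List.nodup_cons.mpr
        ⟨fun hm => absurd (h _ (mem_descList.mp hm)) (lt_irrefl t), descList_nodup s⟩
    · ext x; simp [mem_descList]
  · exact List.pairwise_cons.mpr ⟨fun y hy => h y (mem_descList.mp hy), descList_sorted s⟩

lemma map_eraseIdx {α β : Type*} (f : α → β) :
    ∀ (l : List α) (k : ℕ), (l.map f).eraseIdx k = (l.eraseIdx k).map f := by
  intro l
  induction l with
  | nil => intro k; simp
  | cons x xs ih =>
    intro k
    cases k with
    | zero => simp
    | succ k => simp [List.eraseIdx_cons_succ, ih]

lemma lCr_single (i : Fin d) (w : List (Fin d)) :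
    lCr d i (Finsupp.single w 1) = Finsupp.single (i :: w) 1 := by
  rw [lCr, Finsupp.lmapDomain_apply, Finsupp.mapDomain_single]

lemma lAnn_single (q : ℂ) (i : Fin d) (w : List (Fin d)) :
    lAnn d q i (Finsupp.single w 1)
      = ∑ k ∈ Finset.range w.length,
          if w[k]? = some i then q ^ k • Finsupp.single (w.eraseIdx k) (1 : ℂ) else 0 := by
  rw [lAnn, Finsupp.lsum_single, LinearMap.toSpanSingleton_apply_one]

lemma lAnn_word (q : ℂ) (i : Fin d) (I : ℕ → Fin d) (s : Finset ℕ) :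
    lAnn d q i (Finsupp.single ((descList s).map I) 1)
      = ∑ a ∈ s.filter (fun a => I a = i),
          q ^ ((s.filter (fun c => a < c)).card)
            • Finsupp.single ((descList (s.erase a)).map I) (1 : ℂ) := by
  rw [lAnn_single, ← Finset.sum_filter]
  refine Finset.sum_bij'
    (i := fun k hk => (descList s).get ⟨k, by
      simp only [Finset.mem_filter, Finset.mem_range, List.length_map] at hk; exact hk.1⟩)
    (j := fun a ha => (s.filter (fun c => a < c)).card) ?_ ?_ ?_ ?_ ?_
  · intro k hk
    simp only [Finset.mem_filter, Finset.mem_range, List.length_map] at hk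
    obtain ⟨hk1, hk2⟩ := hk
    rw [List.getElem?_eq_getElem (by simpa using hk1)] at hk2
    simp only [List.getElem_map, Option.some.injEq] at hk2
    simp only [Finset.mem_filter]
    exact ⟨get_mem_descList s k hk1, by simpa using hk2⟩
  · intro a ha
    simp only [Finset.mem_filter] at ha
    obtain ⟨hk, hget⟩ := get_rank ha.1
    simp only [Finset.mem_filter, Finset.mem_range, List.length_map]
    refine ⟨hk, ?_⟩
    rw [List.getElem?_eq_getElem (by simpa using hk)]
    simp only [List.getElem_map, Option.some.injEq]
    have h2 : (descList s)[(Finset.filter (fun c => a < c) s).card] = a := hget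
    rw [h2, ha.2]
  · intro k hk
    simp only [Finset.mem_filter, Finset.mem_range, List.length_map] at hk
    exact rank_get s k hk.1
  · intro a ha
    simp only [Finset.mem_filter] at ha
    obtain ⟨hk, hget⟩ := get_rank ha.1
    exact hget
  · intro k hk
    simp only [Finset.mem_filter, Finset.mem_range, List.length_map] at hk
    obtain ⟨hk1, hk2⟩ := hk
    rw [rank_get s k hk1, map_eraseIdx, descList_eraseIdx s k hk1]

noncomputable def closeSet (I : ℕ → Fin d) (t : ℕ) (P : Finset (ℕ × ℕ)) : Finset ℕ :=
  (opensF P t).filter (fun a => I a = I t)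

noncomputable def Wop (d : ℕ) (q : ℂ) (I : ℕ → Fin d) : ℕ → Module.End ℂ (FockB d)
  | 0 => 1
  | (t+1) => (lCr d (I t) + lAnn d q (I t)) * Wop d q I t

lemma confs_zero (I : ℕ → Fin d) : confs I 0 = {∅} := by
  ext P
  simp only [mem_confs, Finset.mem_singleton]
  constructor
  · intro h
    refine Finset.eq_empty_iff_forall_notMem.mpr fun p hp => ?_
    have := h.1 p hp
    omega
  · rintro rfl
    exact ⟨fun p hp => absurd hp (Finset.notMem_empty p),
      fun p hp => absurd hp (Finset.notMem_empty p)⟩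

lemma wordOf_succ {I : ℕ → Fin d} {t : ℕ} {P : Finset (ℕ × ℕ)} (hc : isConf I t P) :
    wordOf I P (t+1) = I t :: wordOf I P t := by
  rw [wordOf, opensF_succ hc,
    descList_insert_top (fun x hx => (mem_opensF.mp hx).1), List.map_cons, wordOf]

lemma wordOf_insert {I : ℕ → Fin d} {t a : ℕ} {P : Finset (ℕ × ℕ)}
    (hc : isConf I t P) (ha : a ∈ opensF P t) :
    wordOf I (insert (a,t) P) (t+1) = (descList ((opensF P t).erase a)).map I := by
  rw [wordOf, opensF_insert hc ha]

lemma filter_top_eq {I : ℕ → Fin d} {t : ℕ} {P' : Finset (ℕ × ℕ)}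
    (h : isConf I (t+1) P') {a : ℕ} (ha : (a,t) ∈ P') :
    P'.filter (fun p => p.2 = t) = {(a,t)} := by
  ext p
  simp only [Finset.mem_filter, Finset.mem_singleton]
  constructor
  · rintro ⟨hp, h2⟩
    by_contra hne
    exact (h.2 p hp (a,t) ha hne).2.2.2 h2
  · rintro rfl; exact ⟨ha, rfl⟩

noncomputable def thePartner (P : Finset (ℕ × ℕ)) (t : ℕ) : ℕ :=
  ((P.filter (fun p => p.2 = t)).image Prod.fst).sup id

lemma thePartner_eq {I : ℕ → Fin d} {t : ℕ} {P' : Finset (ℕ × ℕ)}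
    (h : isConf I (t+1) P') {a : ℕ} (ha : (a,t) ∈ P') : thePartner P' t = a := by
  rw [thePartner, filter_top_eq h ha, Finset.image_singleton, Finset.sup_singleton]
  rfl

lemma exists_top {I : ℕ → Fin d} {t : ℕ} {P' : Finset (ℕ × ℕ)}
    (h : isConf I (t+1) P') (hc : covered P' t) : ∃ a, (a,t) ∈ P' := by
  obtain ⟨⟨x, y⟩, hp, hor⟩ := hc
  have hb := h.1 _ hp
  simp only [] at hor hb
  rcases hor with h1 | h2
  · exfalso; omega
  · subst h2; exact ⟨x, hp⟩

lemma insert_filter_top {I : ℕ → Fin d} {t : ℕ} {P' : Finset (ℕ × ℕ)}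
    (h : isConf I (t+1) P') {a : ℕ} (ha : (a,t) ∈ P') :
    insert (a,t) (P'.filter (fun p => p.2 ≠ t)) = P' := by
  ext p
  simp only [Finset.mem_insert, Finset.mem_filter]
  constructor
  · rintro (rfl | ⟨hp, _⟩)
    · exact ha
    · exact hp
  · intro hp
    by_cases h2 : p.2 = t
    · left
      have hmem : p ∈ P'.filter (fun p => p.2 = t) := Finset.mem_filter.mpr ⟨hp, h2⟩
      rw [filter_top_eq h ha] at hmem
      simpa using hmem
    · right; exact ⟨hp, h2⟩

lemma restrict_conf {I : ℕ → Fin d} {t : ℕ} {P' : Finset (ℕ × ℕ)}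
    (h : isConf I (t+1) P') : isConf I t (P'.filter (fun p => p.2 ≠ t)) := by
  constructor
  · intro p hp
    obtain ⟨hpm, h2⟩ := Finset.mem_filter.mp hp
    have := h.1 p hpm
    exact ⟨this.1, by omega, this.2.2⟩
  · intro p hp p' hp' hne
    exact h.2 p (Finset.mem_filter.mp hp).1 p' (Finset.mem_filter.mp hp').1 hne

lemma partner_open {I : ℕ → Fin d} {t : ℕ} {P' : Finset (ℕ × ℕ)}
    (h : isConf I (t+1) P') {a : ℕ} (ha : (a,t) ∈ P') :
    a ∈ closeSet I t (P'.filter (fun p => p.2 ≠ t)) := by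
  have hb := h.1 _ ha
  refine Finset.mem_filter.mpr ⟨mem_opensF.mpr ⟨hb.1, ?_⟩, hb.2.2⟩
  rintro ⟨p, hp, hor⟩
  obtain ⟨hpP, hp2⟩ := Finset.mem_filter.mp hp
  have hne : p ≠ (a,t) := fun he => hp2 (by rw [he])
  have hd := h.2 p hpP (a,t) ha hne
  rcases hor with h1 | h2
  · exact hd.1 h1.symm
  · exact hd.2.2.1 h2.symm

lemma filter_insert_ne {I : ℕ → Fin d} {t a : ℕ} {P : Finset (ℕ × ℕ)}
    (hP : isConf I t P) : (insert (a,t) P).filter (fun p => p.2 ≠ t) = P := by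
  rw [Finset.filter_insert, if_neg (by simp)]
  exact Finset.filter_true_of_mem fun p hp => by have := hP.1 p hp; omega

lemma confs_filter_not (I : ℕ → Fin d) (t : ℕ) :
    (confs I (t+1)).filter (fun P => ¬ covered P t) = confs I t := by
  ext P
  simp only [Finset.mem_filter, mem_confs]
  constructor
  · rintro ⟨h, hc⟩
    refine ⟨fun p hp => ?_, h.2⟩
    have := h.1 p hp
    have h2 : p.2 ≠ t := fun he => hc ⟨p, hp, Or.inr he.symm⟩
    exact ⟨this.1, by omega, this.2.2⟩
  · intro h
    exact ⟨isConf_mono h, not_covered_top h⟩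

theorem moment (q : ℂ) (I : ℕ → Fin d) :
    ∀ t, Wop d q I t (fvac d)
      = ∑ P ∈ confs I t, q ^ cW P t • Finsupp.single (wordOf I P t) (1 : ℂ) := by
  intro t
  induction t with
  | zero =>
    rw [confs_zero, Finset.sum_singleton]
    have h1 : cW (∅ : Finset (ℕ × ℕ)) 0 = 0 := by simp [cW, cPP, cPO]
    have h2 : wordOf I (∅ : Finset (ℕ × ℕ)) 0 = [] := by
      simp [wordOf, opensF, descList]
    rw [h1, h2, pow_zero, one_smul]
    rfl
  | succ t ih =>
    have hW : Wop d q I (t+1) (fvac d)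
        = (lCr d (I t) + lAnn d q (I t)) (Wop d q I t (fvac d)) := rfl
    rw [hW, ih, map_sum]
    have hsummand : ∀ P ∈ confs I t,
        (lCr d (I t) + lAnn d q (I t)) (q ^ cW P t • Finsupp.single (wordOf I P t) (1:ℂ))
        = q ^ cW P (t+1) • Finsupp.single (wordOf I P (t+1)) 1
          + ∑ a ∈ closeSet I t P,
              q ^ cW (insert (a,t) P) (t+1)
                • Finsupp.single (wordOf I (insert (a,t) P) (t+1)) 1 := by
      intro P hP
      have hc : isConf I t P := mem_confs.mp hP
      rw [map_smul, LinearMap.add_apply, wordOf, lCr_single,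
        lAnn_word q (I t) I (opensF P t), smul_add, Finset.smul_sum]
      congr 1
      · rw [cW_succ hc, wordOf_succ hc, wordOf]
      · refine Finset.sum_congr rfl fun a ha => ?_
        have hao : a ∈ opensF P t := (Finset.mem_filter.mp ha).1
        rw [smul_smul, ← pow_add, cW_insert hc hao, wordOf_insert hc hao]
    rw [Finset.sum_congr rfl hsummand, Finset.sum_add_distrib]
    rw [← Finset.sum_filter_add_sum_filter_not (confs I (t+1)) (fun P => covered P t)]
    rw [add_comm (∑ P ∈ (confs I (t+1)).filter (fun P => covered P t), _)]
    congr 1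
    · rw [confs_filter_not]
    · rw [Finset.sum_sigma' (confs I t) (fun P => closeSet I t P)]
      refine Finset.sum_bij' (i := fun x _ => insert (x.2, t) x.1)
        (j := fun P' _ => ⟨P'.filter (fun p => p.2 ≠ t), thePartner P' t⟩)
        ?_ ?_ ?_ ?_ ?_
      · rintro ⟨P, a⟩ hx
        rw [Finset.mem_sigma] at hx
        obtain ⟨hP, ha⟩ := hx
        have hc := mem_confs.mp hP
        obtain ⟨hao, haI⟩ := Finset.mem_filter.mp ha
        exact Finset.mem_filter.mpr ⟨mem_confs.mpr (isConf_insert hc hao haI),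
          ⟨(a,t), Finset.mem_insert_self _ _, Or.inr rfl⟩⟩
      · intro P' hP'
        obtain ⟨hP'm, hcov⟩ := Finset.mem_filter.mp hP'
        have hc := mem_confs.mp hP'm
        obtain ⟨a, ha⟩ := exists_top hc hcov
        rw [Finset.mem_sigma]
        constructor
        · exact mem_confs.mpr (restrict_conf hc)
        · rw [thePartner_eq hc ha]
          exact partner_open hc ha
      · rintro ⟨P, a⟩ hx
        rw [Finset.mem_sigma] at hx
        obtain ⟨hP, ha⟩ := hx
        have hc := mem_confs.mp hP
        have hc' : isConf I (t+1) (insert (a,t) P) :=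
          isConf_insert hc (Finset.mem_filter.mp ha).1 (Finset.mem_filter.mp ha).2
        have h1 : (insert (a,t) P).filter (fun p => p.2 ≠ t) = P := filter_insert_ne hc
        have h2 : thePartner (insert (a,t) P) t = a :=
          thePartner_eq hc' (Finset.mem_insert_self _ _)
        simp only [h1, h2]
      · intro P' hP'
        obtain ⟨hP'm, hcov⟩ := Finset.mem_filter.mp hP'
        have hc := mem_confs.mp hP'm
        obtain ⟨a, ha⟩ := exists_top hc hcov
        simp only [thePartner_eq hc ha]
        exact insert_filter_top hc ha
      · rintro ⟨P, a⟩ _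
        rfl

lemma pair_unique {I : ℕ → Fin d} {m : ℕ} {P : Finset (ℕ × ℕ)} (hc : isConf I m P)
    {p q : ℕ × ℕ} (hp : p ∈ P) (hq : q ∈ P) (x : ℕ)
    (hxp : x = p.1 ∨ x = p.2) (hxq : x = q.1 ∨ x = q.2) : p = q := by
  by_contra hne
  have h := hc.2 p hp q hq hne
  rcases hxp with rfl | h1 <;> rcases hxq with h2 | h2 <;> omega

lemma conf_trans {I : ℕ → Fin d} {m : ℕ} {P : Finset (ℕ × ℕ)} (hc : isConf I m P)
    {x y z : ℕ} (hxy : (x,y) ∈ P ∨ (y,x) ∈ P) (hyz : (y,z) ∈ P ∨ (z,y) ∈ P) :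
    x = z := by
  rcases hxy with h1 | h1 <;> rcases hyz with h2 | h2
  · have := pair_unique hc h1 h2 y (Or.inr rfl) (Or.inl rfl)
    have h3 := Prod.ext_iff.mp this
    simp only [] at h3
    omega
  · have := pair_unique hc h1 h2 y (Or.inr rfl) (Or.inr rfl)
    have h3 := Prod.ext_iff.mp this
    simp only [] at h3
    omega
  · have := pair_unique hc h1 h2 y (Or.inl rfl) (Or.inl rfl)
    have h3 := Prod.ext_iff.mp this
    simp only [] at h3
    omega
  · have := pair_unique hc h1 h2 y (Or.inl rfl) (Or.inr rfl)
    have h3 := Prod.ext_iff.mp this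
    simp only [] at h3
    omega

noncomputable def toSetoid (m : ℕ) (P : Finset (ℕ × ℕ)) : Setoid (Fin m) :=
  Relation.EqvGen.setoid (fun i j => ((i:ℕ),(j:ℕ)) ∈ P)

lemma toSetoid_r {I : ℕ → Fin d} {m : ℕ} {P : Finset (ℕ × ℕ)} (hc : isConf I m P)
    (i j : Fin m) :
    (toSetoid m P).r i j ↔ i = j ∨ ((i:ℕ),(j:ℕ)) ∈ P ∨ ((j:ℕ),(i:ℕ)) ∈ P := by
  constructor
  · intro h
    have h' : Relation.EqvGen (fun i j : Fin m => ((i:ℕ),(j:ℕ)) ∈ P) i j := h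
    clear h
    induction h' with
    | rel x y hxy => exact Or.inr (Or.inl hxy)
    | refl x => exact Or.inl rfl
    | symm x y _ ih =>
      rcases ih with h | h | h
      · exact Or.inl h.symm
      · exact Or.inr (Or.inr h)
      · exact Or.inr (Or.inl h)
    | trans x y z _ _ ih1 ih2 =>
      rcases ih1 with rfl | h1
      · exact ih2
      · rcases ih2 with rfl | h2
        · exact Or.inr h1
        · exact Or.inl (Fin.ext (conf_trans hc h1 h2))
  · rintro (rfl | h | h)
    · exact Relation.EqvGen.refl _
    · exact Relation.EqvGen.rel _ _ h
    · exact Relation.EqvGen.symm _ _ (Relation.EqvGen.rel _ _ h)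

lemma complete_iff {P : Finset (ℕ × ℕ)} {m : ℕ} :
    opensF P m = ∅ ↔ ∀ x < m, covered P x := by
  simp only [opensF, Finset.filter_eq_empty_iff, Finset.mem_range, not_not]

lemma bound_of_mem {I : ℕ → Fin d} {m : ℕ} {P : Finset (ℕ × ℕ)} (hc : isConf I m P)
    {p : ℕ × ℕ} (hp : p ∈ P) : p.1 < p.2 ∧ p.2 < m ∧ I p.1 = I p.2 := hc.1 p hp

lemma toSetoid_pp {I : ℕ → Fin d} {m : ℕ} {P : Finset (ℕ × ℕ)} (hc : isConf I m P)
    (hful : ∀ x < m, covered P x) : IsPairPartition (toSetoid m P) := by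
  intro i
  obtain ⟨p, hp, hor⟩ := hful (i : ℕ) i.2
  have hb := hc.1 p hp
  -- the partner
  have hw : ∃ w : Fin m, (w : ℕ) ≠ (i : ℕ) ∧
      (((i:ℕ),(w:ℕ)) ∈ P ∨ ((w:ℕ),(i:ℕ)) ∈ P) := by
    rcases hor with h1 | h2
    · refine ⟨⟨p.2, by omega⟩, by simp; omega,
        Or.inl (show ((i:ℕ), p.2) ∈ P by rw [h1]; simpa using hp)⟩
    · refine ⟨⟨p.1, by omega⟩, by simp; omega,
        Or.inr (show (p.1, (i:ℕ)) ∈ P by rw [h2]; simpa using hp)⟩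
  obtain ⟨w, hwne, hwmem⟩ := hw
  have hset : {j : Fin m | (toSetoid m P).r i j} = {i, w} := by
    ext j
    simp only [Set.mem_setOf_eq, Set.mem_insert_iff, Set.mem_singleton_iff]
    rw [toSetoid_r hc]
    constructor
    · rintro (rfl | h | h)
      · exact Or.inl rfl
      · rcases hwmem with hw1 | hw1
        · have := pair_unique hc h hw1 (i : ℕ) (Or.inl rfl) (Or.inl rfl)
          have h3 := Prod.ext_iff.mp this
          right; exact Fin.ext (by simpa using h3.2)
        · have := pair_unique hc h hw1 (i : ℕ) (Or.inl rfl) (Or.inr rfl)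
          have h3 := Prod.ext_iff.mp this
          simp only [] at h3
          have hbj := hc.1 _ h
          omega
      · rcases hwmem with hw1 | hw1
        · have := pair_unique hc h hw1 (i : ℕ) (Or.inr rfl) (Or.inl rfl)
          have h3 := Prod.ext_iff.mp this
          simp only [] at h3
          have hbj := hc.1 _ h
          omega
        · have := pair_unique hc h hw1 (i : ℕ) (Or.inr rfl) (Or.inr rfl)
          have h3 := Prod.ext_iff.mp this
          right; exact Fin.ext (by simpa using h3.1)
    · rintro (rfl | rfl)
      · exact Or.inl rfl
      · exact Or.inr hwmem
  have hcard : Nat.card {j : Fin m // (toSetoid m P).r i j}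
      = ({i, w} : Set (Fin m)).ncard := by
    rw [← Nat.card_coe_set_eq, ← hset]
    rfl
  rw [hcard, Set.ncard_pair (fun h => hwne (by rw [h]))]

lemma crossings_toSetoid {I : ℕ → Fin d} {m : ℕ} {P : Finset (ℕ × ℕ)}
    (hc : isConf I m P) : crossings (toSetoid m P) = cPP P := by
  rw [crossings, Nat.card_eq_fintype_card, Fintype.card_subtype, cPP]
  refine Finset.card_bij
    (fun t _ => (((t.1:ℕ), (t.2.2.1:ℕ)), ((t.2.1:ℕ), (t.2.2.2:ℕ)))) ?_ ?_ ?_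
  · rintro ⟨a, b, c, e⟩ ht
    simp only [Finset.mem_filter, Finset.mem_univ, true_and] at ht
    obtain ⟨h1, h2, h3, h4, h5, h6⟩ := ht
    rw [Fin.lt_def] at h1 h2 h3
    have hac : ((a:ℕ), (c:ℕ)) ∈ P := by
      rcases (toSetoid_r hc a c).mp h4 with he | h | h
      · exfalso; rw [he] at h1; omega
      · exact h
      · have := (hc.1 _ h).1; exfalso; simp only [] at this; omega
    have hbe : ((b:ℕ), (e:ℕ)) ∈ P := by
      rcases (toSetoid_r hc b e).mp h5 with he | h | h
      · exfalso; rw [he] at h2; omega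
      · exact h
      · have := (hc.1 _ h).1; exfalso; simp only [] at this; omega
    simp only [Finset.mem_filter, Finset.mem_product]
    exact ⟨⟨hac, hbe⟩, h1, h2, h3⟩
  · rintro ⟨a, b, c, e⟩ h1 ⟨a', b', c', e'⟩ h2 heq
    simp only [Prod.mk.injEq] at heq
    obtain ⟨⟨ha, hc'⟩, hb, he⟩ := heq
    simp only [Prod.mk.injEq]
    exact ⟨Fin.val_injective ha, Fin.val_injective hb,
      Fin.val_injective hc', Fin.val_injective he⟩
  · rintro ⟨⟨a, b⟩, ⟨c, e⟩⟩ hpp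
    simp only [Finset.mem_filter, Finset.mem_product] at hpp
    obtain ⟨⟨hP1, hP2⟩, g1, g2, g3⟩ := hpp
    have hb1 := hc.1 _ hP1
    have hb2 := hc.1 _ hP2
    simp only [] at hb1 hb2 g1 g2 g3
    refine ⟨(⟨a, by omega⟩, ⟨c, by omega⟩, ⟨b, by omega⟩, ⟨e, by omega⟩), ?_, rfl⟩
    simp only [Finset.mem_filter, Finset.mem_univ, true_and]
    refine ⟨by rw [Fin.lt_def]; exact g1, by rw [Fin.lt_def]; exact g2,
      by rw [Fin.lt_def]; exact g3, ?_, ?_, ?_⟩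
    · exact (toSetoid_r hc _ _).mpr (Or.inr (Or.inl hP1))
    · exact (toSetoid_r hc _ _).mpr (Or.inr (Or.inl hP2))
    · intro hr
      rcases (toSetoid_r hc _ _).mp hr with he | h | h
      · have : a = c := by simpa using congrArg Fin.val he
        omega
      · simp only [] at h
        have := pair_unique hc h hP1 a (Or.inl rfl) (Or.inl rfl)
        have h3 := Prod.ext_iff.mp this
        simp only [] at h3
        omega
      · simp only [] at h
        have := pair_unique hc h hP2 c (Or.inl rfl) (Or.inl rfl)
        have h3 := Prod.ext_iff.mp this
        simp only [] at h3
        omega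

lemma toSetoid_le_ker {m : ℕ} {P : Finset (ℕ × ℕ)} {I : Fin m → Fin d} {Iext : ℕ → Fin d}
    (hIext : ∀ k (h : k < m), Iext k = I ⟨k, h⟩) (hc : isConf Iext m P) :
    toSetoid m P ≤ Setoid.ker I := by
  rw [Setoid.le_def]
  intro x y h
  have : I x = I y := by
    rcases (toSetoid_r hc x y).mp h with rfl | h | h
    · rfl
    · have hb := (hc.1 _ h).2.2
      rwa [hIext _ x.2, hIext _ y.2, Fin.eta, Fin.eta] at hb
    · have hb := (hc.1 _ h).2.2
      rw [hIext _ y.2, hIext _ x.2, Fin.eta, Fin.eta] at hb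
      exact hb.symm
  exact this

lemma toSetoid_subset {I : ℕ → Fin d} {m : ℕ} {P P' : Finset (ℕ × ℕ)}
    (hc : isConf I m P) (hc' : isConf I m P')
    (h : toSetoid m P = toSetoid m P') : P ⊆ P' := by
  rintro ⟨x, y⟩ hxy
  have hb := hc.1 _ hxy
  simp only [] at hb
  have hr : (toSetoid m P).r ⟨x, by omega⟩ ⟨y, by omega⟩ :=
    (toSetoid_r hc _ _).mpr (Or.inr (Or.inl hxy))
  rw [h] at hr
  rcases (toSetoid_r hc' _ _).mp hr with he | h2 | h2
  · exfalso
    have : x = y := by simpa using congrArg Fin.val he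
    omega
  · exact h2
  · have hb2 := (hc'.1 _ h2).1
    simp only [] at hb2
    exfalso; omega

lemma partner_exists {m : ℕ} {π : Setoid (Fin m)} (hπ : IsPairPartition π) (i : Fin m) :
    ∃ w, w ≠ i ∧ ∀ j, π.r i j ↔ (j = i ∨ j = w) := by
  have h2 : ({j : Fin m | π.r i j}).ncard = 2 := by
    rw [← Nat.card_coe_set_eq]; exact hπ i
  obtain ⟨x, y, hxy, hset⟩ := Set.ncard_eq_two.mp h2
  have hi : i ∈ {j : Fin m | π.r i j} := π.iseqv.refl i
  rw [hset] at hi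
  rcases hi with rfl | rfl
  · refine ⟨y, fun h => hxy h.symm, fun j => ?_⟩
    have : π.r i j ↔ j ∈ {j : Fin m | π.r i j} := Iff.rfl
    rw [this, hset]
    simp [Set.mem_insert_iff]
  · refine ⟨x, fun h => hxy h, fun j => ?_⟩
    have hiff : π.r i j ↔ j ∈ {j : Fin m | π.r i j} := Iff.rfl
    rw [hiff, hset]
    simp [Set.mem_insert_iff, or_comm]

lemma partner_unique {m : ℕ} {π : Setoid (Fin m)} (hπ : IsPairPartition π) {i j k : Fin m}
    (hj : π.r i j) (hk : π.r i k) (hji : j ≠ i) (hki : k ≠ i) : j = k := by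
  obtain ⟨w, hw, hch⟩ := partner_exists hπ i
  rcases (hch j).mp hj with h | h
  · exact absurd h hji
  · rcases (hch k).mp hk with h' | h'
    · exact absurd h' hki
    · rw [h, h']

noncomputable def fromSetoid {m : ℕ} (π : Setoid (Fin m)) : Finset (ℕ × ℕ) :=
  (Finset.univ.filter (fun p : Fin m × Fin m => p.1 < p.2 ∧ π.r p.1 p.2)).image
    (fun p => ((p.1 : ℕ), (p.2 : ℕ)))

lemma mem_fromSetoid {m : ℕ} {π : Setoid (Fin m)} {x y : ℕ} :
    (x, y) ∈ fromSetoid π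
      ↔ ∃ i j : Fin m, i < j ∧ π.r i j ∧ (i:ℕ) = x ∧ (j:ℕ) = y := by
  simp only [fromSetoid, Finset.mem_image, Finset.mem_filter, Finset.mem_univ, true_and,
    Prod.ext_iff, Prod.exists]
  constructor
  · rintro ⟨i, j, ⟨h1, h2⟩, h3, h4⟩
    exact ⟨i, j, h1, h2, h3, h4⟩
  · rintro ⟨i, j, h1, h2, h3, h4⟩
    exact ⟨i, j, ⟨h1, h2⟩, h3, h4⟩

lemma fromSetoid_shared {m : ℕ} {π : Setoid (Fin m)} (hπ : IsPairPartition π)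
    {i j i' j' : Fin m} (h1 : i < j) (hr : π.r i j) (h2 : i' < j') (hr' : π.r i' j')
    (hsh : i = i' ∨ i = j' ∨ j = i' ∨ j = j') : i = i' ∧ j = j' := by
  have hji : j ≠ i := fun he => absurd h1 (by rw [he]; exact lt_irrefl _)
  have hji' : j' ≠ i' := fun he => absurd h2 (by rw [he]; exact lt_irrefl _)
  rcases hsh with rfl | rfl | rfl | rfl
  · exact ⟨rfl, partner_unique hπ hr hr' hji hji'⟩
  · exfalso
    have hr2 : π.r i i' := π.iseqv.symm hr'
    have : j = i' := partner_unique hπ hr hr2 hji (fun he => absurd h2 (by rw [he]; exact lt_irrefl _))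
    rw [this] at h1
    exact absurd (lt_trans h2 h1) (lt_irrefl _)
  · exfalso
    have hr1 : π.r j i := π.iseqv.symm hr
    have hij : i ≠ j := fun he => hji he.symm
    have : i = j' := partner_unique hπ hr1 hr' hij hji'
    rw [this] at h1
    exact absurd (lt_trans h1 h2) (lt_irrefl _)
  · have hr1 : π.r j i := π.iseqv.symm hr
    have hr2 : π.r j i' := π.iseqv.symm hr'
    have hij : i ≠ j := fun he => hji he.symm
    have hij' : i' ≠ j := fun he => hji' he.symm
    exact ⟨partner_unique hπ hr1 hr2 hij hij', rfl⟩

lemma fromSetoid_conf {m : ℕ} {π : Setoid (Fin m)} (hπ : IsPairPartition π)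
    {I : Fin m → Fin d} {Iext : ℕ → Fin d}
    (hIext : ∀ k (h : k < m), Iext k = I ⟨k, h⟩) (hker : π ≤ Setoid.ker I) :
    isConf Iext m (fromSetoid π) := by
  constructor
  · rintro ⟨x, y⟩ hp
    obtain ⟨i, j, h1, h2, rfl, rfl⟩ := mem_fromSetoid.mp hp
    refine ⟨h1, j.2, ?_⟩
    have : I i = I j := Setoid.le_def.mp hker h2
    rwa [hIext _ i.2, hIext _ j.2, Fin.eta, Fin.eta]
  · rintro ⟨x, y⟩ hp ⟨x', y'⟩ hp' hne
    obtain ⟨i, j, h1, h2, rfl, rfl⟩ := mem_fromSetoid.mp hp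
    obtain ⟨i', j', h1', h2', rfl, rfl⟩ := mem_fromSetoid.mp hp'
    simp only [ne_eq, Fin.val_inj]
    refine ⟨?_, ?_, ?_, ?_⟩ <;> intro he <;>
      obtain ⟨e1, e2⟩ := fromSetoid_shared hπ h1 h2 h1' h2' (by tauto) <;>
      exact hne (by rw [e1, e2])

lemma fromSetoid_complete {m : ℕ} {π : Setoid (Fin m)} (hπ : IsPairPartition π) :
    opensF (fromSetoid π) m = ∅ := by
  rw [complete_iff]
  intro x hx
  obtain ⟨w, hw, hch⟩ := partner_exists hπ ⟨x, hx⟩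
  have hr : π.r ⟨x, hx⟩ w := (hch w).mpr (Or.inr rfl)
  rcases lt_or_gt_of_ne (fun h => hw h.symm) with hlt | hlt
  · exact ⟨(x, (w:ℕ)), mem_fromSetoid.mpr ⟨⟨x, hx⟩, w, hlt, hr, rfl, rfl⟩, Or.inl rfl⟩
  · exact ⟨((w:ℕ), x), mem_fromSetoid.mpr ⟨w, ⟨x, hx⟩, hlt, π.iseqv.symm hr, rfl, rfl⟩,
      Or.inr rfl⟩

lemma toSetoid_fromSetoid {m : ℕ} {π : Setoid (Fin m)} (hπ : IsPairPartition π)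
    {I : ℕ → Fin d} (hc : isConf I m (fromSetoid π)) :
    toSetoid m (fromSetoid π) = π := by
  apply Setoid.ext
  intro x y
  rw [show (toSetoid m (fromSetoid π)) x y ↔ (toSetoid m (fromSetoid π)).r x y from Iff.rfl,
    toSetoid_r hc]
  constructor
  · rintro (rfl | h | h)
    · exact π.iseqv.refl x
    · obtain ⟨i, j, h1, h2, h3, h4⟩ := mem_fromSetoid.mp h
      rwa [Fin.val_inj.mp h3, Fin.val_inj.mp h4] at h2
    · obtain ⟨i, j, h1, h2, h3, h4⟩ := mem_fromSetoid.mp h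
      exact π.iseqv.symm (by rwa [Fin.val_inj.mp h3, Fin.val_inj.mp h4] at h2)
  · intro h
    by_cases hxy : x = y
    · exact Or.inl hxy
    · rcases lt_or_gt_of_ne hxy with hlt | hlt
      · exact Or.inr (Or.inl (mem_fromSetoid.mpr ⟨x, y, hlt, h, rfl, rfl⟩))
      · exact Or.inr (Or.inr (mem_fromSetoid.mpr ⟨y, x, hlt, π.iseqv.symm h, rfl, rfl⟩))

instance setoidFinite (m : ℕ) : Finite (Setoid (Fin m)) :=
  Finite.of_injective (fun s => s.r) (fun a b h => by cases a; cases b; cases h; rfl)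

noncomputable instance setoidFintype (m : ℕ) : Fintype (Setoid (Fin m)) :=
  Fintype.ofFinite _

lemma moment_eval (q : ℂ) (I : ℕ → Fin d) (m : ℕ) :
    Wop d q I m (fvac d) ([] : List (Fin d))
      = ∑ P ∈ (confs I m).filter (fun P => opensF P m = ∅), q ^ cPP P := by
  rw [moment, Finsupp.finset_sum_apply, Finset.sum_filter]
  refine Finset.sum_congr rfl fun P hP => ?_
  rw [Finsupp.smul_apply, Finsupp.single_apply]
  by_cases h : opensF P m = ∅
  · rw [if_pos h]
    have hw : wordOf I P m = [] := by
      rw [wordOf, h]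
      simp [descList]
    rw [if_pos hw]
    have hcPO : cPO P m = 0 := by
      rw [cPO, h]
      simp
    rw [show cW P m = cPP P by rw [cW, hcPO, add_zero]]
    rw [smul_eq_mul, mul_one]
  · rw [if_neg h]
    have hw : ¬ wordOf I P m = [] := by
      rw [wordOf]
      intro hmap
      exact h (descList_eq_nil.mp (List.map_eq_nil_iff.mp hmap))
    rw [if_neg hw, smul_eq_mul, mul_zero]

lemma eval_to_partitions (q : ℂ) (m : ℕ) (I : Fin m → Fin d) (Iext : ℕ → Fin d)
    (hIext : ∀ k (h : k < m), Iext k = I ⟨k, h⟩) :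
    (∑ P ∈ (confs Iext m).filter (fun P => opensF P m = ∅), q ^ cPP P)
      = ∑ π : {π : Setoid (Fin m) // IsPairPartition π},
          (if π.1 ≤ Setoid.ker I then q ^ crossings π.1 else 0) := by
  rw [← Finset.sum_filter]
  refine Finset.sum_bij
    (i := fun P hP => (⟨toSetoid m P,
      toSetoid_pp (mem_confs.mp (Finset.mem_filter.mp hP).1)
        (complete_iff.mp (Finset.mem_filter.mp hP).2)⟩ : {π : Setoid (Fin m) // IsPairPartition π}))
    ?_ ?_ ?_ ?_
  · intro P hP
    obtain ⟨hPm, hcomp⟩ := Finset.mem_filter.mp hP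
    exact Finset.mem_filter.mpr ⟨Finset.mem_univ _,
      toSetoid_le_ker hIext (mem_confs.mp hPm)⟩
  · intro P hP P' hP' heq
    have h := congrArg Subtype.val heq
    simp only [] at h
    exact Finset.Subset.antisymm
      (toSetoid_subset (mem_confs.mp (Finset.mem_filter.mp hP).1)
        (mem_confs.mp (Finset.mem_filter.mp hP').1) h)
      (toSetoid_subset (mem_confs.mp (Finset.mem_filter.mp hP').1)
        (mem_confs.mp (Finset.mem_filter.mp hP).1) h.symm)
  · intro π hπmem
    obtain ⟨_, hker⟩ := Finset.mem_filter.mp hπmem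
    have hconf : isConf Iext m (fromSetoid π.1) := fromSetoid_conf π.2 hIext hker
    refine ⟨fromSetoid π.1, Finset.mem_filter.mpr
      ⟨mem_confs.mpr hconf, fromSetoid_complete π.2⟩, ?_⟩
    exact Subtype.ext (toSetoid_fromSetoid π.2 hconf)
  · intro P hP
    rw [crossings_toSetoid (mem_confs.mp (Finset.mem_filter.mp hP).1)]

lemma count_I (m : ℕ) (ρ : Setoid (Fin m)) :
    (Finset.univ.filter (fun I : Fin m → Fin d => ρ ≤ Setoid.ker I)).card
      = d ^ numBlocks ρ := by
  rw [← Fintype.card_subtype]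
  have e : {I : Fin m → Fin d // ρ ≤ Setoid.ker I} ≃ (Quotient ρ → Fin d) :=
    { toFun := fun I => Quotient.lift I.1 (fun a b h => Setoid.le_def.mp I.2 h)
      invFun := fun g => ⟨fun i => g (Quotient.mk ρ i), by
        rw [Setoid.le_def]
        intro x y h
        show g _ = g _
        rw [Quotient.sound h]⟩
      left_inv := fun I => Subtype.ext rfl
      right_inv := fun g => by
        funext x
        induction x using Quotient.ind
        rfl }
  rw [Fintype.card_congr e, Fintype.card_fun, Fintype.card_fin, numBlocks,
    Nat.card_eq_fintype_card]

lemma Wop_congr (q : ℂ) {I J : ℕ → Fin d} :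
    ∀ t, (∀ k, k < t → I k = J k) → Wop d q I t = Wop d q J t := by
  intro t
  induction t with
  | zero => intro _; rfl
  | succ t ih =>
    intro h
    show (lCr d (I t) + lAnn d q (I t)) * Wop d q I t = _
    rw [h t (Nat.lt_succ_self t), ih (fun k hk => h k (Nat.lt_succ_of_lt hk))]
    rfl

noncomputable def extF {m : ℕ} (i₀ : Fin d) (I : Fin m → Fin d) : ℕ → Fin d :=
  fun k => if h : k < m then I ⟨k, h⟩ else i₀

lemma extF_spec {m : ℕ} (i₀ : Fin d) (I : Fin m → Fin d) (k : ℕ) (h : k < m) :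
    extF i₀ I k = I ⟨k, h⟩ := dif_pos h

def snocE (d m : ℕ) : (Fin d × (Fin m → Fin d)) ≃ (Fin (m+1) → Fin d) where
  toFun p := Fin.snoc p.2 p.1
  invFun I := (I (Fin.last m), I ∘ Fin.castSucc)
  left_inv p := by
    obtain ⟨i, I⟩ := p
    have h1 : (Fin.snoc I i : Fin (m+1) → Fin d) (Fin.last m) = i := Fin.snoc_last _ _
    have h2 : ((Fin.snoc I i : Fin (m+1) → Fin d) ∘ Fin.castSucc) = I :=
      funext fun j => Fin.snoc_castSucc _ _ j
    simp only [h1, h2]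
  right_inv I := by
    funext j
    induction j using Fin.lastCases with
    | last => exact Fin.snoc_last _ _
    | cast j => exact Fin.snoc_castSucc _ _ j

lemma Wop_snoc (q : ℂ) (i₀ : Fin d) {m : ℕ} (i : Fin d) (I : Fin m → Fin d) :
    Wop d q (extF i₀ (Fin.snoc I i : Fin (m+1) → Fin d)) (m+1)
      = (lCr d i + lAnn d q i) * Wop d q (extF i₀ I) m := by
  show (lCr d (extF i₀ (Fin.snoc I i) m) + lAnn d q (extF i₀ (Fin.snoc I i) m))
      * Wop d q (extF i₀ (Fin.snoc I i)) m = _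
  have h1 : extF i₀ (Fin.snoc I i : Fin (m+1) → Fin d) m = i := by
    rw [extF_spec i₀ _ m (Nat.lt_succ_self m)]
    exact Fin.snoc_last _ _
  have h2 : Wop d q (extF i₀ (Fin.snoc I i : Fin (m+1) → Fin d)) m
      = Wop d q (extF i₀ I) m := by
    refine Wop_congr q m fun k hk => ?_
    rw [extF_spec i₀ _ k (Nat.lt_succ_of_lt hk), extF_spec i₀ I k hk]
    exact Fin.snoc_castSucc (α := fun _ => Fin d) i I ⟨k, hk⟩
  rw [h1, h2]

lemma map_mul' (f g f' g' : Module.End ℂ (FockB d)) :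
    TensorProduct.map (f * g) (f' * g')
      = TensorProduct.map f f' * TensorProduct.map g g' := by
  rw [Module.End.mul_eq_comp, Module.End.mul_eq_comp, Module.End.mul_eq_comp,
    TensorProduct.map_comp]

lemma pow_expand (q : ℂ) (i₀ : Fin d) :
    ∀ m : ℕ, (∑ i : Fin d,
        TensorProduct.map (lCr d i + lAnn d q i) (lCr d i + lAnn d q i)) ^ m
      = ∑ I : Fin m → Fin d,
          TensorProduct.map (Wop d q (extF i₀ I) m) (Wop d q (extF i₀ I) m) := by
  intro m
  induction m with
  | zero =>
    rw [pow_zero]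
    have h : ∀ I : Fin 0 → Fin d,
        TensorProduct.map (Wop d q (extF i₀ I) 0) (Wop d q (extF i₀ I) 0) = 1 :=
      fun I => TensorProduct.map_one
    rw [Finset.sum_congr rfl (fun I _ => h I), Finset.sum_const]
    have : (Finset.univ : Finset (Fin 0 → Fin d)).card = 1 := by
      rw [Finset.card_univ, Fintype.card_fun]
      simp
    rw [this, one_smul]
  | succ m ih =>
    rw [pow_succ', ih, Finset.mul_sum]
    have hterm : ∀ I : Fin m → Fin d,
        (∑ i : Fin d, TensorProduct.map (lCr d i + lAnn d q i) (lCr d i + lAnn d q i))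
          * TensorProduct.map (Wop d q (extF i₀ I) m) (Wop d q (extF i₀ I) m)
        = ∑ i : Fin d, TensorProduct.map
            (Wop d q (extF i₀ (snocE d m (i, I))) (m+1))
            (Wop d q (extF i₀ (snocE d m (i, I))) (m+1)) := by
      intro I
      rw [Finset.sum_mul]
      refine Finset.sum_congr rfl fun i _ => ?_
      rw [show (snocE d m (i, I) : Fin (m+1) → Fin d) = Fin.snoc I i from rfl,
        Wop_snoc q i₀ i I, map_mul']
    rw [Finset.sum_congr rfl (fun I _ => hterm I)]
    rw [Finset.sum_comm]
    rw [← Fintype.sum_prod_type']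
    exact Equiv.sum_comp (snocE d m) (fun I =>
      TensorProduct.map (Wop d q (extF i₀ I) (m+1)) (Wop d q (extF i₀ I) (m+1)))

lemma vacState2_sum {ι : Type*} (s : Finset ι) (F G : ι → Module.End ℂ (FockB d)) :
    vacState2 d (∑ i ∈ s, TensorProduct.map (F i) (G i))
      = ∑ i ∈ s, (F i (fvac d) ([] : List (Fin d)))
          * (G i (fvac d) ([] : List (Fin d))) := by
  rw [vacState2, LinearMap.sum_apply, map_sum, map_sum]
  refine Finset.sum_congr rfl fun i _ => ?_
  rw [TensorProduct.map_tmul, TensorProduct.map_tmul, TensorProduct.lid_tmul,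
    Finsupp.lapply_apply, Finsupp.lapply_apply, smul_eq_mul]

end S14

open S14 in
/-- (φ_vac ⊗ φ_vac)(X_{d;q}ⁿ) = Σ_{π,σ ∈ P₂(2n)} d^{|π∨σ|} q^{cr(π)+cr(σ)}. -/
theorem stmt_14 (d n : ℕ) (q : ℝ) (hq1 : -1 < q) (hq2 : q < 1) :
    vacState2 d ((Xop d (q : ℂ)) ^ n) =
      ∑ᶠ π : {π : Setoid (Fin (2*n)) // IsPairPartition π},
        ∑ᶠ σ : {σ : Setoid (Fin (2*n)) // IsPairPartition σ},
          (d : ℂ) ^ numBlocks (π.1 ⊔ σ.1) * (q : ℂ) ^ (crossings π.1 + crossings σ.1) := by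
  classical
  simp only [finsum_eq_sum_of_fintype]
  by_cases hd0 : d = 0
  · subst hd0
    rcases Nat.eq_zero_or_pos n with rfl | hn
    · -- n = 0, d = 0
      haveI hFE : IsEmpty (Fin (2*0)) := ⟨fun i => absurd i.2 (by omega)⟩
      have hL : vacState2 0 ((Xop 0 (q:ℂ)) ^ 0) = 1 := by
        rw [pow_zero, vacState2, Module.End.one_apply, TensorProduct.map_tmul,
          TensorProduct.lid_tmul]
        simp [fvac]
      rw [hL]
      have hQE : ∀ ρ : Setoid (Fin (2*0)), IsEmpty (Quotient ρ) :=
        fun ρ => ⟨fun x => Quotient.ind (motive := fun _ => False)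
          (fun i => IsEmpty.elim hFE i) x⟩
      have hval : ∀ π σ : {π : Setoid (Fin (2*0)) // IsPairPartition π},
          ((0:ℕ) : ℂ) ^ numBlocks (π.1 ⊔ σ.1) * (q : ℂ) ^ (crossings π.1 + crossings σ.1)
            = 1 := by
        intro π σ
        have h1 : numBlocks (π.1 ⊔ σ.1) = 0 := by
          rw [numBlocks]
          exact @Nat.card_of_isEmpty _ (hQE _)
        have h2 : crossings π.1 = 0 := by
          rw [crossings]
          exact @Nat.card_of_isEmpty _ (by
            refine ⟨fun t => IsEmpty.elim hFE t.1.1⟩)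
        have h3 : crossings σ.1 = 0 := by
          rw [crossings]
          exact @Nat.card_of_isEmpty _ (by
            refine ⟨fun t => IsEmpty.elim hFE t.1.1⟩)
        rw [h1, h2, h3, pow_zero, pow_zero, mul_one]
      
      rw [Finset.sum_congr rfl (fun π _ => Finset.sum_congr rfl (fun σ _ => hval π σ))]
      have hbot : IsPairPartition (⊥ : Setoid (Fin (2*0))) := fun i => IsEmpty.elim hFE i
      have hsub : ∀ y : {π : Setoid (Fin (2*0)) // IsPairPartition π},
          y = ⟨⊥, hbot⟩ := by
        intro y
        refine Subtype.ext (Setoid.ext fun a b => IsEmpty.elim hFE a)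
      have hcard : (Finset.univ : Finset {π : Setoid (Fin (2*0)) // IsPairPartition π}).card = 1 := by
        rw [Finset.card_univ]
        exact Fintype.card_eq_one_iff.mpr ⟨⟨⊥, hbot⟩, fun y => hsub y⟩
      simp [Finset.sum_const, hcard]
    · -- n > 0, d = 0
      have hX : Xop 0 (q:ℂ) = 0 := by
        rw [Xop, Finset.univ_eq_empty, Finset.sum_empty]
        exact zero_pow two_ne_zero
      have hL : vacState2 0 ((Xop 0 (q:ℂ)) ^ n) = 0 := by
        rw [hX, zero_pow (Nat.pos_iff_ne_zero.mp hn)]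
        simp [vacState2]
      rw [hL]
      refine (Finset.sum_eq_zero fun π _ => Finset.sum_eq_zero fun σ _ => ?_).symm
      have hNB : numBlocks (π.1 ⊔ σ.1) ≠ 0 := by
        rw [numBlocks]
        haveI : Nonempty (Quotient (π.1 ⊔ σ.1)) := ⟨Quotient.mk _ ⟨0, by omega⟩⟩
        exact Nat.pos_iff_ne_zero.mp Nat.card_pos
      rw [Nat.cast_zero, zero_pow hNB, zero_mul]
  · -- d > 0
    have hd : 0 < d := Nat.pos_of_ne_zero hd0
    rw [Xop, ← pow_mul, pow_expand (q:ℂ) ⟨0, hd⟩ (2*n), vacState2_sum]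
    have hterm : ∀ I : Fin (2*n) → Fin d,
        Wop d (q:ℂ) (extF ⟨0, hd⟩ I) (2*n) (fvac d) ([] : List (Fin d))
          = ∑ π : {π : Setoid (Fin (2*n)) // IsPairPartition π},
              (if π.1 ≤ Setoid.ker I then (q:ℂ) ^ crossings π.1 else 0) := by
      intro I
      rw [moment_eval, eval_to_partitions (q:ℂ) (2*n) I (extF ⟨0, hd⟩ I)
        (fun k h => extF_spec ⟨0, hd⟩ I k h)]
    rw [Finset.sum_congr rfl (fun I _ => by rw [hterm I])]
    rw [Finset.sum_congr rfl (fun I _ => Finset.sum_mul_sum Finset.univ Finset.univ _ _)]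
    rw [Finset.sum_comm]
    rw [Finset.sum_congr rfl (fun π _ => Finset.sum_comm)]
    refine Finset.sum_congr rfl fun π _ => Finset.sum_congr rfl fun σ _ => ?_
    have hmerge : ∀ I : Fin (2*n) → Fin d,
        (if π.1 ≤ Setoid.ker I then (q:ℂ) ^ crossings π.1 else 0)
          * (if σ.1 ≤ Setoid.ker I then (q:ℂ) ^ crossings σ.1 else 0)
        = if π.1 ⊔ σ.1 ≤ Setoid.ker I
            then (q:ℂ) ^ (crossings π.1 + crossings σ.1) else 0 := by
      intro I
      rw [pow_add]
      by_cases h1 : π.1 ≤ Setoid.ker I <;> by_cases h2 : σ.1 ≤ Setoid.ker I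
      · rw [if_pos h1, if_pos h2, if_pos (sup_le_iff.mpr ⟨h1, h2⟩)]
      · rw [if_pos h1, if_neg h2, if_neg (fun h => h2 (le_trans le_sup_right h)), mul_zero]
      · rw [if_neg h1, if_neg (fun h => h1 (le_trans le_sup_left h)), zero_mul]
      · rw [if_neg h1, if_neg (fun h => h1 (le_trans le_sup_left h)), zero_mul]
    rw [Finset.sum_congr rfl (fun I _ => hmerge I), ← Finset.sum_filter,
      Finset.sum_const, count_I (2*n) (π.1 ⊔ σ.1), nsmul_eq_mul, Nat.cast_pow]
end
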